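/- arXiv:1902.11080 — 10 statements merged into one kernel-verified Lean document; each statement's English description precedes it below -/
import Mathlib

section
/- Let (X, d) be a metric space. If X has the equal-radius Besicovitch intersection property for open balls with constant E (i.e., every family of open balls of a common radius r, such that no ball contains the center of another, has the property that at most E of them contain any given point), then X has the Besicovitch intersection property for closed balls of equal radius with the same constant E. -/
open Metric Set

/-- If a metric space has the equal-radius Besicovitch intersection property for
open balls with constant `E`, then it has it for closed balls with the same constant. -/
theorem equal_radius_besicovitch_open_to_closed {X : Type*} [MetricSpace X] (E : ℕ)
    (hE : ∀ (r : ℝ), 0 < r → ∀ (s : Set X) (y : X),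
      (∀ x ∈ s, y ∈ Metric.ball x r) →
      (s.Pairwise fun a b => r ≤ dist a b) → s.Finite ∧ s.ncard ≤ E) :
    ∀ (r : ℝ), 0 < r → ∀ (s : Set X) (y : X),
      (∀ x ∈ s, y ∈ Metric.closedBall x r) →
      (s.Pairwise fun a b => r < dist a b) → s.Finite ∧ s.ncard ≤ E := by
  intro r hr s y hclosed hpair
  -- Key claim: every finite subset of `s` has at most `E` elements.
  have key : ∀ t ⊆ s, t.Finite → t.ncard ≤ E := by
    intro t hts ht
    classical
    by_cases hne : (ht.toFinset.offDiag).Nonempty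
    · -- at least two points: take the minimal pairwise distance as the new radius
      set r' := ht.toFinset.offDiag.inf' hne (fun p => dist p.1 p.2) with hr'def
      have hrr' : r < r' := by
        rw [hr'def, Finset.lt_inf'_iff]
        rintro ⟨a, b⟩ hab
        rw [Finset.mem_offDiag] at hab
        obtain ⟨ha, hb, hne'⟩ := hab
        exact hpair (hts (ht.mem_toFinset.1 ha)) (hts (ht.mem_toFinset.1 hb)) hne'
      have hr'pos : 0 < r' := hr.trans hrr'
      refine (hE r' hr'pos t y ?_ ?_).2
      · intro x hx
        have := hclosed x (hts hx)
        rw [mem_closedBall] at this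
        exact mem_ball.2 (lt_of_le_of_lt this hrr')
      · intro a ha b hb hab
        exact Finset.inf'_le (fun p => dist p.1 p.2)
          (show (a, b) ∈ ht.toFinset.offDiag from
            Finset.mem_offDiag.2 ⟨ht.mem_toFinset.2 ha, ht.mem_toFinset.2 hb, hab⟩)
    · -- at most one point: use radius `2 * r`
      have hsub : t.Subsingleton := by
        intro a ha b hb
        by_contra hne'
        exact hne ⟨(a, b), Finset.mem_offDiag.2
          ⟨ht.mem_toFinset.2 ha, ht.mem_toFinset.2 hb, hne'⟩⟩
      refine (hE (2 * r) (by linarith) t y ?_ (hsub.pairwise _)).2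
      intro x hx
      have := hclosed x (hts hx)
      rw [mem_closedBall] at this
      exact mem_ball.2 (by linarith)
  by_cases hfin : s.Finite
  · exact ⟨hfin, key s subset_rfl hfin⟩
  · exfalso
    obtain ⟨t, hts, htfin, htcard⟩ :=
      Set.Infinite.exists_subset_ncard_eq hfin (E + 1)
    have := key t hts htfin
    omega
end

section
/- Let (X, ‖·‖) be a normed vector space and let x, z ∈ X be nonzero vectors with ‖z‖ ≤ ‖x‖ and ‖x − z‖ > ‖x‖. Then ‖ x/‖x‖ − z/‖z‖ ‖ > 1. -/
/-- If `‖z‖ ≤ ‖x‖` and `‖x − z‖ > ‖x‖` for nonzero vectors `x, z` in a normed space,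
then the distance between the normalizations of `x` and `z` exceeds `1`. -/
theorem norm_normalize_sub_normalize_gt_one {X : Type*} [NormedAddCommGroup X]
    [NormedSpace ℝ X] (x z : X) (hx : x ≠ 0) (hz : z ≠ 0)
    (h1 : ‖z‖ ≤ ‖x‖) (h2 : ‖x‖ < ‖x - z‖) :
    1 < ‖‖x‖⁻¹ • x - ‖z‖⁻¹ • z‖ := by
  have ha : 0 < ‖x‖ := norm_pos_iff.mpr hx
  have hb : 0 < ‖z‖ := norm_pos_iff.mpr hz
  have key : ‖x - z‖ ≤ (‖x‖ - ‖z‖) + ‖z‖ * ‖‖x‖⁻¹ • x - ‖z‖⁻¹ • z‖ := by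
    have hdecomp : x - z = (1 - ‖z‖/‖x‖) • x + ‖z‖ • (‖x‖⁻¹ • x - ‖z‖⁻¹ • z) := by
      rw [smul_sub, smul_smul, smul_smul, sub_smul, one_smul, div_eq_mul_inv,
        mul_inv_cancel₀ hb.ne', one_smul]
      abel
    calc ‖x - z‖ = ‖(1 - ‖z‖/‖x‖) • x + ‖z‖ • (‖x‖⁻¹ • x - ‖z‖⁻¹ • z)‖ := by rw [hdecomp]
      _ ≤ ‖(1 - ‖z‖/‖x‖) • x‖ + ‖‖z‖ • (‖x‖⁻¹ • x - ‖z‖⁻¹ • z)‖ := norm_add_le _ _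
      _ = (‖x‖ - ‖z‖) + ‖z‖ * ‖‖x‖⁻¹ • x - ‖z‖⁻¹ • z‖ := by
          rw [norm_smul, norm_smul, Real.norm_eq_abs, Real.norm_eq_abs,
            abs_of_pos hb, abs_of_nonneg (sub_nonneg.mpr ((div_le_one ha).mpr h1))]
          field_simp
  nlinarith [key, h2, hb]
end

section
/- (Maligranda's angular distance inequality) Let (X, ‖·‖) be a normed vector space and let x, z ∈ X be nonzero. Then ‖ x/‖x‖ − z/‖z‖ ‖ ≥ (‖x − z‖ − | ‖x‖ − ‖z‖ |) / min{‖x‖, ‖z‖}. -/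
/-- Maligranda's angular distance inequality: for nonzero vectors `x, z` in a normed
space, `‖x/‖x‖ − z/‖z‖‖ ≥ (‖x − z‖ − |‖x‖ − ‖z‖|) / min ‖x‖ ‖z‖`. -/
theorem maligranda_angular_distance {X : Type*} [NormedAddCommGroup X]
    [NormedSpace ℝ X] (x z : X) (hx : x ≠ 0) (hz : z ≠ 0) :
    (‖x - z‖ - |‖x‖ - ‖z‖|) / min ‖x‖ ‖z‖ ≤ ‖‖x‖⁻¹ • x - ‖z‖⁻¹ • z‖ := by
  wlog hba : ‖z‖ ≤ ‖x‖ with H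
  · have h := H z x hz hx (le_of_not_ge hba)
    rw [norm_sub_rev z x, norm_sub_rev (‖z‖⁻¹ • z), abs_sub_comm, min_comm] at h
    exact h
  have ha : (0:ℝ) < ‖x‖ := norm_pos_iff.mpr hx
  have hb : (0:ℝ) < ‖z‖ := norm_pos_iff.mpr hz
  rw [min_eq_right hba, abs_of_nonneg (sub_nonneg.mpr hba), div_le_iff₀ hb]
  have key : x - z = (1 - ‖z‖/‖x‖) • x + ‖z‖ • (‖x‖⁻¹ • x - ‖z‖⁻¹ • z) := by
    rw [smul_sub, sub_smul, one_smul, smul_smul, smul_smul, div_eq_mul_inv,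
      mul_inv_cancel₀ hb.ne', one_smul]
    abel
  have hcoef : (0:ℝ) ≤ 1 - ‖z‖/‖x‖ := by
    rw [sub_nonneg, div_le_one ha]; exact hba
  have h1 : ‖x - z‖ ≤ (1 - ‖z‖/‖x‖) * ‖x‖ + ‖z‖ * ‖‖x‖⁻¹ • x - ‖z‖⁻¹ • z‖ := by
    rw [key]
    refine (norm_add_le _ _).trans ?_
    rw [norm_smul, norm_smul, Real.norm_eq_abs, Real.norm_eq_abs,
      abs_of_nonneg hcoef, abs_of_nonneg hb.le]
  have h2 : (1 - ‖z‖/‖x‖) * ‖x‖ = ‖x‖ - ‖z‖ := by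
    field_simp
  linarith
end

section
/- Let (X, ‖·‖) be a Banach space (or any normed vector space). Let {B^cl(x_1, r_1), ..., B^cl(x_n, r_n)} be a finite family of closed balls with a common point y, such that for all i ≠ j, ‖x_i − x_j‖ > max{r_i, r_j} (a Besicovitch family). Then there exist points z_1, ..., z_n and a radius ρ > 0 such that all closed balls B^cl(z_i, ρ) contain a common point and ‖z_i − z_j‖ > ρ for all i ≠ j. Consequently, the Besicovitch constant L(X) equals the equal-radius Besicovitch constant E(X). -/
private lemma besi_key {X : Type*} [NormedAddCommGroup X] [NormedSpace ℝ X]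
    {a b : X} {ρ : ℝ} (hρ : 0 < ρ) (hba : ‖b‖ ≤ ‖a‖) (hab : ‖a‖ < ‖a - b‖)
    (h2 : 2 * ρ ≤ ‖a - b‖) :
    ρ < ‖(ρ / max ρ ‖a‖) • a - (ρ / max ρ ‖b‖) • b‖ := by
  rcases le_or_gt ‖a‖ ρ with h | h
  · have hb : ‖b‖ ≤ ρ := hba.trans h
    rw [max_eq_left h, max_eq_left hb, div_self hρ.ne', one_smul, one_smul]
    linarith
  · have ha0 : 0 < ‖a‖ := hρ.trans h
    rw [max_eq_right h.le]
    set ta : ℝ := ρ / ‖a‖ with hta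
    set tb : ℝ := ρ / max ρ ‖b‖ with htb
    have hM : 0 < max ρ ‖b‖ := lt_max_of_lt_left (lt_of_lt_of_le hρ le_rfl)
    have hMa : max ρ ‖b‖ ≤ ‖a‖ := max_le h.le hba
    have htbpos : 0 < tb := div_pos hρ hM
    have htale : ta ≤ tb := by
      rw [hta, htb]
      gcongr
    have htapos : 0 < ta := div_pos hρ ha0
    have hid : ta • a - tb • b = tb • (a - b) - (tb - ta) • a := by
      simp only [smul_sub, sub_smul]
      abel
    rw [hid]
    have h1 : ‖tb • (a - b)‖ - ‖(tb - ta) • a‖ ≤ ‖tb • (a - b) - (tb - ta) • a‖ :=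
      norm_sub_norm_le _ _
    rw [norm_smul, norm_smul, Real.norm_of_nonneg htbpos.le,
      Real.norm_of_nonneg (by linarith)] at h1
    have hta_a : ta * ‖a‖ = ρ := div_mul_cancel₀ ρ ha0.ne'
    have hgt : 0 < tb * (‖a - b‖ - ‖a‖) := mul_pos htbpos (by linarith)
    nlinarith

private lemma besi_aux {X : Type*} [NormedAddCommGroup X] [NormedSpace ℝ X] (n : ℕ)
    (x : Fin n → X) (rad : Fin n → ℝ) (hrad : ∀ i, 0 < rad i) (y : X)
    (hy : ∀ i, ‖y - x i‖ ≤ rad i)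
    (hB : ∀ i j, i ≠ j → max (rad i) (rad j) < ‖x i - x j‖) :
    ∃ (z : Fin n → X) (ρ : ℝ), 0 < ρ ∧ (∃ w : X, ∀ i, ‖w - z i‖ ≤ ρ) ∧
      ∀ i j, i ≠ j → ρ < ‖z i - z j‖ := by
  classical
  set S : Finset ℝ := insert (2:ℝ)
    ((Finset.univ.filter (fun p : Fin n × Fin n => p.1 ≠ p.2)).image
      (fun p => ‖x p.1 - x p.2‖)) with hS
  have hSne : S.Nonempty := ⟨2, Finset.mem_insert_self _ _⟩
  set m : ℝ := S.min' hSne with hm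
  have hall : ∀ r ∈ S, 0 < r := by
    intro r hr
    rw [hS, Finset.mem_insert] at hr
    rcases hr with h | h
    · rw [h]; norm_num
    · rw [Finset.mem_image] at h
      obtain ⟨p, hp, hpe⟩ := h
      rw [Finset.mem_filter] at hp
      rw [← hpe]
      calc (0:ℝ) < rad p.1 := hrad p.1
        _ ≤ max (rad p.1) (rad p.2) := le_max_left _ _
        _ < ‖x p.1 - x p.2‖ := hB p.1 p.2 hp.2
  have hmpos : 0 < m := hall _ (S.min'_mem hSne)
  set ρ : ℝ := m / 2 with hρdef
  have hρ : 0 < ρ := by positivity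
  have h2 : ∀ i j, i ≠ j → 2 * ρ ≤ ‖x i - x j‖ := by
    intro i j hij
    have hmem : ‖x i - x j‖ ∈ S := by
      rw [hS, Finset.mem_insert]
      right
      rw [Finset.mem_image]
      exact ⟨(i, j), by simp [hij], rfl⟩
    have := S.min'_le _ hmem
    rw [← hm] at this
    linarith
  set z : Fin n → X := fun i => y + (ρ / max ρ ‖x i - y‖) • (x i - y) with hz
  refine ⟨z, ρ, hρ, ⟨y, ?_⟩, ?_⟩
  · intro i
    have hd : (0:ℝ) ≤ ρ / max ρ ‖x i - y‖ :=
      div_nonneg hρ.le (le_trans hρ.le (le_max_left _ _))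
    have : y - z i = -((ρ / max ρ ‖x i - y‖) • (x i - y)) := by simp only [hz]; abel
    rw [this, norm_neg, norm_smul, Real.norm_of_nonneg hd]
    rw [div_mul_eq_mul_div, div_le_iff₀ (lt_max_of_lt_left hρ)]
    have : ‖x i - y‖ ≤ max ρ ‖x i - y‖ := le_max_right _ _
    nlinarith
  · intro i j hij
    have hza : ∀ k l, z k - z l =
        (ρ / max ρ ‖x k - y‖) • (x k - y) - (ρ / max ρ ‖x l - y‖) • (x l - y) := by
      intro k l; simp only [hz]; abel
    have hsub : ∀ k l, (x k - y) - (x l - y) = x k - x l := by intro k l; abel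
    have hnorm : ∀ k, ‖x k - y‖ ≤ rad k := fun k => by
      rw [norm_sub_rev]; exact hy k
    rcases le_total ‖x j - y‖ ‖x i - y‖ with h | h
    · rw [hza]
      have hab : ‖x i - y‖ < ‖(x i - y) - (x j - y)‖ := by
        rw [hsub]
        exact lt_of_le_of_lt (le_trans (hnorm i) (le_max_left _ _)) (hB i j hij)
      have h2' : 2 * ρ ≤ ‖(x i - y) - (x j - y)‖ := by rw [hsub]; exact h2 i j hij
      exact besi_key hρ h hab h2'
    · rw [hza, norm_sub_rev]
      have hab : ‖x j - y‖ < ‖(x j - y) - (x i - y)‖ := by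
        rw [hsub]
        exact lt_of_le_of_lt (le_trans (hnorm j) (le_max_left _ _)) (hB j i (Ne.symm hij))
      have h2' : 2 * ρ ≤ ‖(x j - y) - (x i - y)‖ := by
        rw [hsub]; exact h2 j i (Ne.symm hij)
      exact besi_key hρ h hab h2'

/-- In a normed space, every finite intersecting Besicovitch family of closed balls
can be replaced by an intersecting equal-radius Besicovitch family of the same
cardinality; consequently the Besicovitch constant equals the equal-radius
Besicovitch constant. -/
theorem besicovitch_family_to_equal_radius {X : Type*} [NormedAddCommGroup X]
    [NormedSpace ℝ X] (n : ℕ)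
    (x : Fin n → X) (rad : Fin n → ℝ) (hrad : ∀ i, 0 < rad i) (y : X)
    (hy : ∀ i, ‖y - x i‖ ≤ rad i)
    (hB : ∀ i j, i ≠ j → max (rad i) (rad j) < ‖x i - x j‖) :
    (∃ (z : Fin n → X) (ρ : ℝ), 0 < ρ ∧ (∃ w : X, ∀ i, ‖w - z i‖ ≤ ρ) ∧
      ∀ i j, i ≠ j → ρ < ‖z i - z j‖) ∧
    ({m : ℕ | ∃ (u : Fin m → X) (s : Fin m → ℝ) (w : X), (∀ i, 0 < s i) ∧
        (∀ i, ‖w - u i‖ ≤ s i) ∧ ∀ i j, i ≠ j → max (s i) (s j) < ‖u i - u j‖}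
      = {m : ℕ | ∃ (u : Fin m → X) (ρ : ℝ) (w : X), 0 < ρ ∧
        (∀ i, ‖w - u i‖ ≤ ρ) ∧ ∀ i j, i ≠ j → ρ < ‖u i - u j‖}) := by
  constructor
  · exact besi_aux n x rad hrad y hy hB
  · ext m
    simp only [Set.mem_setOf_eq]
    constructor
    · rintro ⟨u, s, w, hs, hw, hsep⟩
      obtain ⟨z, ρ, hρ, ⟨w', hw'⟩, hzsep⟩ := besi_aux m u s hs w hw hsep
      exact ⟨z, ρ, w', hρ, hw', hzsep⟩
    · rintro ⟨u, ρ, w, hρ, hw, hsep⟩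
      exact ⟨u, fun _ => ρ, w, fun _ => hρ, hw,
        fun i j hij => by simpa using hsep i j hij⟩
end

section
/- Let (X, d) be a metric space with equal-radius Besicovitch constant E < ∞, let μ be a τ-additive locally finite Borel measure on X with full support, let r > 0, and let g ∈ L¹(μ) with g ≥ 0. Then ‖A^o_{r,μ} g‖_{L¹(μ)} ≤ E · ‖g‖_{L¹(μ)}, where A^o_{r,μ} g(x) = (1/μ(B^o(x,r))) ∫_{B^o(x,r)} g dμ is the open-ball averaging operator. -/
open MeasureTheory Metric Set ENNReal

/-- A Borel measure is τ-additive if the measure of any union of open sets is the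
supremum of the measures of finite subunions. -/
def TauAdditive {X : Type*} [MetricSpace X] [MeasurableSpace X] (μ : Measure X) : Prop :=
  ∀ S : Set (Set X), (∀ O ∈ S, IsOpen O) →
    μ (⋃₀ S) = ⨆ (t : Finset (Set X)) (_ : ↑t ⊆ S), μ (⋃ O ∈ t, (O : Set X))

section Aux

variable {X : Type*} [MetricSpace X] [MeasurableSpace X] [BorelSpace X]

lemma aux_secondCountable (μ : Measure X)
    (hloc : ∀ s : Set X, Bornology.IsBounded s → μ s < ⊤)
    (hfull : ∀ (x : X) (ρ : ℝ), 0 < ρ → 0 < μ (Metric.ball x ρ)) :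
    SecondCountableTopology X := by
  rcases isEmpty_or_nonempty X with h | hne
  · exact Metric.secondCountable_of_almost_dense_set fun ε hε => ⟨∅, countable_empty,
      fun x => isEmptyElim x⟩
  obtain ⟨x₀⟩ := hne
  refine Metric.secondCountable_of_almost_dense_set fun ε hε => ?_
  have hz : ∀ c ⊆ {s : Set X | s.Pairwise fun a b => ε ≤ dist a b}, IsChain (· ⊆ ·) c →
      ∃ ub ∈ {s : Set X | s.Pairwise fun a b => ε ≤ dist a b}, ∀ s ∈ c, s ⊆ ub := by
    intro c hc hchain
    refine ⟨⋃₀ c, ?_, fun s hs => subset_sUnion_of_mem hs⟩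
    intro a ha b hb hab
    obtain ⟨s, hs, has⟩ := ha
    obtain ⟨t, ht, hbt⟩ := hb
    rcases hchain.total hs ht with hst | hts
    · exact hc ht (hst has) hbt hab
    · exact hc hs has (hts hbt) hab
  obtain ⟨m, hm⟩ := zorn_subset {s : Set X | s.Pairwise fun a b => ε ≤ dist a b} hz
  refine ⟨m, ?_, ?_⟩
  · -- countability
    have hcov : m = ⋃ n : ℕ, m ∩ ball x₀ n := by
      rw [← inter_iUnion, Metric.iUnion_ball_nat, inter_univ]
    rw [hcov]
    refine countable_iUnion fun n => ?_
    set ν : Measure X := μ.restrict (ball x₀ (n + ε)) with hν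
    haveI : IsFiniteMeasure ν := by
      constructor
      rw [hν, Measure.restrict_apply_univ]
      exact hloc _ isBounded_ball
    have hcnt := MeasureTheory.Measure.countable_meas_pos_of_disjoint_iUnion (μ := ν)
      (ι := ↥(m ∩ ball x₀ n)) (As := fun i => ball (i : X) (ε / 2))
      (fun i => measurableSet_ball) ?_
    · have : {i : ↥(m ∩ ball x₀ n) | 0 < ν (ball (i : X) (ε / 2))} = univ := by
        refine eq_univ_of_forall fun i => ?_
        have hsub : ball (i : X) (ε / 2) ⊆ ball x₀ (n + ε) := by
          intro z hz
          have h1 : dist (i : X) x₀ < n := i.2.2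
          have h2 : dist z (i : X) < ε / 2 := hz
          calc dist z x₀ ≤ dist z (i : X) + dist (i : X) x₀ := dist_triangle _ _ _
          _ < ε / 2 + n := by linarith
          _ ≤ n + ε := by linarith
        have : ν (ball (i : X) (ε / 2)) = μ (ball (i : X) (ε / 2)) := by
          rw [hν, Measure.restrict_apply measurableSet_ball, inter_eq_self_of_subset_left hsub]
        show 0 < ν (ball (i : X) (ε / 2))
        rw [this]
        exact hfull _ _ (by linarith)
      rw [this] at hcnt
      have : Countable ↥(m ∩ ball x₀ n) := countable_univ_iff.mp hcnt
      exact countable_coe_iff.mp this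
    · intro i j hij
      have hd : ε ≤ dist (i : X) (j : X) := hm.1 i.2.1 j.2.1 (fun h => hij (Subtype.ext h))
      exact Metric.ball_disjoint_ball (by linarith)
  · intro x
    by_contra hx
    push_neg at hx
    have hxm : x ∉ m := fun h => by
      have := hx x h
      rw [dist_self] at this
      linarith
    have hins : insert x m ∈ {s : Set X | s.Pairwise fun a b => ε ≤ dist a b} := by
      refine Set.pairwise_insert.mpr ⟨hm.1, fun y hy hxy => ?_⟩
      have := le_of_lt (hx y hy)
      constructor
      · linarith
      · rw [dist_comm]; linarith
    have := hm.2 hins (subset_insert x m)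
    exact hxm (this (mem_insert x m))

lemma aux_meas_ball (μ : Measure X) (r : ℝ) :
    Measurable fun x => μ (Metric.ball x r) := by
  have hlsc : LowerSemicontinuous fun x => μ (Metric.ball x r) := by
    intro x c hc
    have hcov : Metric.ball x r = ⋃ n : ℕ, Metric.ball x (r - 1 / (n + 1)) := by
      ext z
      simp only [mem_iUnion, mem_ball]
      constructor
      · intro hz
        obtain ⟨n, hn⟩ := exists_nat_one_div_lt (show 0 < r - dist z x by linarith)
        exact ⟨n, by linarith⟩
      · rintro ⟨n, hn⟩
        have : (0:ℝ) < 1 / (n + 1) := by positivity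
        linarith
    have hmono : Monotone fun n : ℕ => Metric.ball x (r - 1 / (n + 1)) := by
      intro a b hab
      apply Metric.ball_subset_ball
      have : (1:ℝ) / (b + 1) ≤ 1 / (a + 1) := by
        apply one_div_le_one_div_of_le (by positivity)
        exact_mod_cast by omega
      linarith
    have := Directed.measure_iUnion (μ := μ)
      (s := fun n : ℕ => Metric.ball x (r - 1 / (n + 1))) hmono.directed_le
    simp only at hc
    rw [hcov, this] at hc
    obtain ⟨n, hn⟩ := lt_iSup_iff.mp hc
    have hopen : ∀ᶠ y in nhds x, y ∈ Metric.ball x (1 / (n + 1)) :=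
      eventually_mem_nhds_iff.mpr (Metric.ball_mem_nhds x (by positivity)) |>.mono
        (fun y hy => mem_of_mem_nhds hy)
    refine hopen.mono fun y hy => lt_of_lt_of_le hn (measure_mono ?_)
    intro z hz
    have h1 : dist z x < r - 1/(n+1) := hz
    have h2 : dist y x < 1/(n+1) := hy
    calc dist z y ≤ dist z x + dist x y := dist_triangle _ _ _
    _ < r - 1/(n+1) + 1/(n+1) := by rw [dist_comm x y]; linarith
    _ = r := by ring
  exact hlsc.measurable

lemma aux_key (E : ℕ)
    (hE : ∀ (ρ : ℝ), 0 < ρ → ∀ (s : Set X) (y : X),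
      (∀ x ∈ s, y ∈ Metric.ball x ρ) →
      (s.Pairwise fun a b => ρ ≤ dist a b) → s.Finite ∧ s.ncard ≤ E)
    (μ : Measure X)
    (hloc : ∀ s : Set X, Bornology.IsBounded s → μ s < ⊤)
    (r : ℝ) (hr : 0 < r) (y : X) :
    ∫⁻ x in Metric.ball y r, (μ (Metric.ball x r))⁻¹ ∂μ ≤ (E : ℝ≥0∞) := by
  classical
  set f := fun x => μ (Metric.ball x r) with hf
  have hfm : Measurable f := aux_meas_ball μ r
  have hffin : ∀ x, f x ≠ ∞ := fun x => (hloc _ Metric.isBounded_ball).ne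
  -- the greedy step
  have step : ∀ (ε η : ℝ≥0∞), ε ≠ 0 → ε ≠ ∞ → η ≠ 0 → η ≠ ∞ → ∀ n : ℕ, ∀ s : Finset X,
      (↑s ⊆ Metric.ball y r) → ((↑s : Set X).Pairwise fun a b => r ≤ dist a b) →
      E ≤ s.card + n →
      ∫⁻ x in (Metric.ball y r \ ⋃ z ∈ s, Metric.ball z r), (f x ⊔ η)⁻¹ ∂μ
        ≤ (1 + ε) * n := by
    intro ε η hε0 hεt hη0 hηt n
    induction n with
    | zero =>
      intro s hs hsep hcard
      have hempty : Metric.ball y r \ ⋃ z ∈ s, Metric.ball z r = ∅ := by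
        by_contra h
        obtain ⟨x, hx⟩ := nonempty_iff_ne_empty.mpr h
        have hxb : x ∈ Metric.ball y r := hx.1
        have hxn : ∀ z ∈ s, x ∉ Metric.ball z r := by
          intro z hz hxz
          exact hx.2 (mem_biUnion hz hxz)
        have hxs : x ∉ (s : Set X) := fun h' => hxn x h' (Metric.mem_ball_self hr)
        have hT := hE r hr (insert x ↑s) y ?_ ?_
        · have hcard1 : (insert x (↑s : Set X)).ncard = s.card + 1 := by
            rw [Set.ncard_insert_of_notMem hxs s.finite_toSet, Set.ncard_coe_finset]
          have := hT.2
          rw [hcard1] at this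
          omega
        · intro z hz
          rcases hz with rfl | hz
          · rw [Metric.mem_ball, dist_comm]; exact hxb
          · rw [Metric.mem_ball, dist_comm]; exact hs hz
        · refine Set.pairwise_insert.mpr ⟨hsep, fun z hz hne => ?_⟩
          have h1 : r ≤ dist x z := not_lt.mp (fun h' => hxn z hz h')
          exact ⟨h1, by rwa [dist_comm]⟩
      rw [hempty]
      simp
    | succ n ih =>
      intro s hs hsep hcard
      set W := Metric.ball y r \ ⋃ z ∈ s, Metric.ball z r with hW
      rcases eq_empty_or_nonempty W with hWe | hWne
      · rw [hWe]; simp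
      set φ := fun x => f x ⊔ η with hφ
      have hφ0 : ∀ x, φ x ≠ 0 := fun x => by
        simp only [hφ]
        exact fun h => hη0 (by simpa using (sup_eq_bot_iff.mp h).2)
      have hφt : ∀ x, φ x ≠ ∞ := fun x =>
        (sup_lt_iff.mpr ⟨hloc _ Metric.isBounded_ball, hηt.lt_top⟩).ne
      have hsel : ∃ x₀ ∈ W, φ x₀ ≤ (1 + ε) * ⨅ x ∈ W, φ x := by
        set I := ⨅ x ∈ W, φ x with hI
        rcases eq_top_or_lt_top I with hIt | hIlt
        · obtain ⟨x₀, hx₀⟩ := hWne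
          refine ⟨x₀, hx₀, ?_⟩
          rw [hIt, ENNReal.mul_top (by simp [hε0])]
          exact le_top
        · have hIη : η ≤ I := le_iInf₂ fun x _ => le_sup_right
          have hI0 : I ≠ 0 := fun h => hη0 (le_antisymm (h ▸ hIη) zero_le)
          have h1 : I < (1 + ε) * I := by
            conv_lhs => rw [← one_mul I]
            exact ENNReal.mul_lt_mul_left hI0 hIlt.ne
              (ENNReal.lt_add_right one_ne_top hε0)
          have h2 : ⨅ x ∈ W, φ x < (1 + ε) * I := h1
          obtain ⟨x₀, h3⟩ := iInf_lt_iff.mp h2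
          obtain ⟨hx₀W, h4⟩ := iInf_lt_iff.mp h3
          exact ⟨x₀, hx₀W, h4.le⟩
      obtain ⟨x₀, hx₀W, hx₀⟩ := hsel
      have hx₀b : x₀ ∈ Metric.ball y r := hx₀W.1
      have hx₀n : ∀ z ∈ s, r ≤ dist x₀ z := by
        intro z hz
        by_contra h'
        exact hx₀W.2 (mem_biUnion hz (Metric.mem_ball.mpr (not_le.mp h')))
      have hx₀s : x₀ ∉ s := fun h' => absurd (hx₀n x₀ h') (by rw [dist_self]; exact not_le.mpr hr)
      have hptw : ∀ x ∈ W, (φ x)⁻¹ ≤ (1 + ε) * (φ x₀)⁻¹ := by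
        intro x hxW
        have hIle : φ x₀ ≤ (1 + ε) * φ x :=
          hx₀.trans (mul_le_mul_right (iInf₂_le x hxW) _)
        rw [← div_eq_mul_inv]
        rw [ENNReal.le_div_iff_mul_le (Or.inl (hφ0 x₀)) (Or.inl (hφt x₀))]
        calc (φ x)⁻¹ * φ x₀ ≤ (φ x)⁻¹ * ((1 + ε) * φ x) := mul_le_mul_right hIle _
          _ = (1 + ε) * ((φ x)⁻¹ * φ x) := by ring
          _ = 1 + ε := by rw [ENNReal.inv_mul_cancel (hφ0 x) (hφt x), mul_one]
      have IH := ih (insert x₀ s) ?_ ?_ ?_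
      · have hsplit : W ⊆ (Metric.ball y r \ ⋃ z ∈ insert x₀ s, Metric.ball z r)
            ∪ (W ∩ Metric.ball x₀ r) := by
          intro x hx
          by_cases hxb : x ∈ Metric.ball x₀ r
          · exact Or.inr ⟨hx, hxb⟩
          · refine Or.inl ⟨hx.1, ?_⟩
            intro hmem
            simp only [Finset.coe_insert, Finset.mem_insert, mem_iUnion] at hmem
            obtain ⟨z, hz, hxz⟩ := hmem
            rcases hz with rfl | hz
            · exact hxb hxz
            · exact hx.2 (mem_biUnion hz hxz)
        have hB : ∫⁻ x in W ∩ Metric.ball x₀ r, (φ x)⁻¹ ∂μ ≤ 1 + ε := by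
          calc ∫⁻ x in W ∩ Metric.ball x₀ r, (φ x)⁻¹ ∂μ
              ≤ ∫⁻ _ in W ∩ Metric.ball x₀ r, (1 + ε) * (φ x₀)⁻¹ ∂μ :=
                setLIntegral_mono measurable_const (fun x hx => hptw x hx.1)
            _ = (1 + ε) * (φ x₀)⁻¹ * μ (W ∩ Metric.ball x₀ r) := setLIntegral_const _ _
            _ ≤ (1 + ε) * (φ x₀)⁻¹ * φ x₀ := by
                refine mul_le_mul_right ?_ _
                refine le_trans (measure_mono inter_subset_right) le_sup_left
            _ = (1 + ε) * ((φ x₀)⁻¹ * φ x₀) := by rw [mul_assoc]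
            _ = 1 + ε := by rw [ENNReal.inv_mul_cancel (hφ0 x₀) (hφt x₀), mul_one]
        calc ∫⁻ x in W, (φ x)⁻¹ ∂μ
            ≤ ∫⁻ x in (Metric.ball y r \ ⋃ z ∈ insert x₀ s, Metric.ball z r)
                ∪ (W ∩ Metric.ball x₀ r), (φ x)⁻¹ ∂μ := lintegral_mono_set hsplit
          _ ≤ _ + _ := lintegral_union_le _ _ _
          _ ≤ (1 + ε) * n + (1 + ε) := add_le_add IH hB
          _ = (1 + ε) * (n + 1 : ℕ) := by push_cast; ring
      · rw [Finset.coe_insert]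
        exact insert_subset hx₀b hs
      · rw [Finset.coe_insert]
        refine Set.pairwise_insert.mpr ⟨hsep, fun z hz hne => ?_⟩
        exact ⟨hx₀n z hz, by rw [dist_comm]; exact hx₀n z hz⟩
      · rw [Finset.card_insert_of_notMem hx₀s]
        omega
  -- step 2: remove η via monotone convergence, for fixed ε
  have h2 : ∀ ε : ℝ≥0∞, ε ≠ 0 → ε ≠ ∞ →
      ∫⁻ x in Metric.ball y r, (f x)⁻¹ ∂μ ≤ (1 + ε) * E := by
    intro ε hε0 hεt
    have hpt : ∀ x, (f x)⁻¹ = ⨆ m : ℕ, (f x ⊔ ((m + 1 : ℕ) : ℝ≥0∞)⁻¹)⁻¹ := by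
      intro x
      rw [← ENNReal.inv_iInf]
      congr 1
      refine le_antisymm (le_iInf fun m => le_sup_left) ?_
      refine ENNReal.le_of_forall_pos_le_add fun δ hδ _ => ?_
      obtain ⟨mn, hmn⟩ := ENNReal.exists_inv_nat_lt
        (show ((δ : ℝ≥0∞)) ≠ 0 from by exact_mod_cast hδ.ne')
      refine le_trans (iInf_le _ mn) ?_
      have h1 : ((mn + 1 : ℕ) : ℝ≥0∞)⁻¹ ≤ (δ : ℝ≥0∞) := by
        refine le_trans ?_ hmn.le
        exact ENNReal.inv_le_inv.mpr (by exact_mod_cast Nat.le_succ mn)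
      calc f x ⊔ ((mn + 1 : ℕ) : ℝ≥0∞)⁻¹ ≤ f x ⊔ (δ : ℝ≥0∞) := sup_le_sup_left h1 _
        _ ≤ f x + δ := sup_le le_self_add le_add_self
    calc ∫⁻ x in Metric.ball y r, (f x)⁻¹ ∂μ
        = ∫⁻ x in Metric.ball y r, ⨆ m : ℕ, (f x ⊔ ((m + 1 : ℕ) : ℝ≥0∞)⁻¹)⁻¹ ∂μ := by
          exact lintegral_congr fun x => hpt x
      _ = ⨆ m : ℕ, ∫⁻ x in Metric.ball y r, (f x ⊔ ((m + 1 : ℕ) : ℝ≥0∞)⁻¹)⁻¹ ∂μ := by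
          refine lintegral_iSup (fun m => ?_) (fun a b hab x => ?_)
          · exact (hfm.sup measurable_const).inv
          · refine ENNReal.inv_le_inv.mpr (sup_le_sup_left ?_ _)
            exact ENNReal.inv_le_inv.mpr (by exact_mod_cast Nat.succ_le_succ hab)
      _ ≤ (1 + ε) * E := by
          refine iSup_le fun m => ?_
          have hm0 : ((m + 1 : ℕ) : ℝ≥0∞)⁻¹ ≠ 0 := ENNReal.inv_ne_zero.mpr (natCast_ne_top _)
          have hmt : ((m + 1 : ℕ) : ℝ≥0∞)⁻¹ ≠ ∞ :=
            ENNReal.inv_ne_top.mpr (by exact_mod_cast Nat.succ_ne_zero m)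
          have := step ε _ hε0 hεt hm0 hmt E ∅ (by simp) (by simp) (by simp)
          simpa using this
  -- step 3: remove ε
  refine ENNReal.le_of_forall_pos_le_add fun δ hδ _ => ?_
  rcases Nat.eq_zero_or_pos E with hE0 | hEpos
  · have := h2 1 one_ne_zero one_ne_top
    simp only [hE0, Nat.cast_zero, mul_zero] at this
    exact le_trans this zero_le
  have hEne : (E : ℝ≥0∞) ≠ 0 := Nat.cast_ne_zero.mpr hEpos.ne'
  have hEnt : (E : ℝ≥0∞) ≠ ∞ := natCast_ne_top E
  have hε0 : (δ : ℝ≥0∞) / E ≠ 0 :=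
    (ENNReal.div_pos (by exact_mod_cast hδ.ne') hEnt).ne'
  have hεt : (δ : ℝ≥0∞) / E ≠ ∞ := (ENNReal.div_lt_top coe_ne_top hEne).ne
  calc ∫⁻ x in Metric.ball y r, (f x)⁻¹ ∂μ ≤ (1 + (δ : ℝ≥0∞) / E) * E := h2 _ hε0 hεt
    _ = E + (δ : ℝ≥0∞) / E * E := by rw [add_mul, one_mul]
    _ = E + δ := by rw [ENNReal.div_mul_cancel hEne hEnt]

end Aux

-- main work lemma
theorem averaging_main {X : Type*} [MetricSpace X]
    [MeasurableSpace X] [BorelSpace X] (E : ℕ)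
    (hE : ∀ (ρ : ℝ), 0 < ρ → ∀ (s : Set X) (y : X),
      (∀ x ∈ s, y ∈ Metric.ball x ρ) →
      (s.Pairwise fun a b => ρ ≤ dist a b) → s.Finite ∧ s.ncard ≤ E)
    (μ : Measure X)
    (hloc : ∀ s : Set X, Bornology.IsBounded s → μ s < ⊤)
    (hfull : ∀ (x : X) (ρ : ℝ), 0 < ρ → 0 < μ (Metric.ball x ρ))
    (r : ℝ) (hr : 0 < r)
    (g : X → ℝ≥0∞) (hg : Measurable g) :
    ∫⁻ x, (μ (Metric.ball x r))⁻¹ * ∫⁻ y in Metric.ball x r, g y ∂μ ∂μ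
      ≤ (E : ℝ≥0∞) * ∫⁻ x, g x ∂μ := by
  classical
  rcases isEmpty_or_nonempty X with h | hne
  · rw [lintegral_of_isEmpty, lintegral_of_isEmpty]
    simp
  haveI : SecondCountableTopology X := aux_secondCountable μ hloc hfull
  haveI : IsLocallyFiniteMeasure μ :=
    ⟨fun x => ⟨Metric.ball x 1, Metric.ball_mem_nhds x one_pos, hloc _ Metric.isBounded_ball⟩⟩
  set f := fun x => μ (Metric.ball x r) with hfdef
  have hfm : Measurable f := aux_meas_ball μ r
  set S : Set (X × X) := {p : X × X | dist p.2 p.1 < r} with hS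
  have hSmeas : MeasurableSet S := by
    have : IsOpen S :=
      isOpen_lt (continuous_dist.comp (continuous_snd.prodMk continuous_fst)) continuous_const
    exact this.measurableSet
  set F : X × X → ℝ≥0∞ := S.indicator (fun q => (f q.1)⁻¹ * g q.2) with hF
  have hFm : Measurable F :=
    (((hfm.comp measurable_fst).inv).mul (hg.comp measurable_snd)).indicator hSmeas
  have hswap : ∫⁻ x, ∫⁻ y, F (x, y) ∂μ ∂μ = ∫⁻ y, ∫⁻ x, F (x, y) ∂μ ∂μ :=
    lintegral_lintegral_swap (f := fun x y => F (x, y)) hFm.aemeasurable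
  have hL : ∀ x, ∫⁻ y, F (x, y) ∂μ = (f x)⁻¹ * ∫⁻ y in Metric.ball x r, g y ∂μ := by
    intro x
    have h1 : ∀ y, F (x, y) = (Metric.ball x r).indicator (fun y => (f x)⁻¹ * g y) y := by
      intro y
      by_cases h : y ∈ Metric.ball x r
      · rw [Set.indicator_of_mem h]
        exact Set.indicator_of_mem (show (x, y) ∈ S from h) _
      · rw [Set.indicator_of_notMem h]
        exact Set.indicator_of_notMem (show (x, y) ∉ S from h) _
    rw [lintegral_congr h1, lintegral_indicator measurableSet_ball,
      lintegral_const_mul _ hg]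
  have hR : ∀ y, ∫⁻ x, F (x, y) ∂μ = g y * ∫⁻ x in Metric.ball y r, (f x)⁻¹ ∂μ := by
    intro y
    have h1 : ∀ x, F (x, y) = (Metric.ball y r).indicator (fun x => (f x)⁻¹ * g y) x := by
      intro x
      have hiff : (x, y) ∈ S ↔ x ∈ Metric.ball y r := by
        simp only [hS, mem_setOf_eq, Metric.mem_ball, dist_comm]
      show S.indicator (fun q => (f q.1)⁻¹ * g q.2) (x, y) = _
      by_cases h : x ∈ Metric.ball y r
      · rw [Set.indicator_of_mem h, Set.indicator_of_mem (hiff.mpr h)]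
      · rw [Set.indicator_of_notMem h, Set.indicator_of_notMem (fun hc => h (hiff.mp hc))]
    rw [lintegral_congr h1, lintegral_indicator measurableSet_ball,
      lintegral_mul_const (f := fun x => (f x)⁻¹) _ hfm.inv, mul_comm]
  calc ∫⁻ x, (f x)⁻¹ * ∫⁻ y in Metric.ball x r, g y ∂μ ∂μ
      = ∫⁻ x, ∫⁻ y, F (x, y) ∂μ ∂μ := (lintegral_congr hL).symm
    _ = ∫⁻ y, ∫⁻ x, F (x, y) ∂μ ∂μ := hswap
    _ = ∫⁻ y, g y * ∫⁻ x in Metric.ball y r, (f x)⁻¹ ∂μ ∂μ := lintegral_congr hR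
    _ ≤ ∫⁻ y, g y * E ∂μ := lintegral_mono fun y =>
        mul_le_mul_right (aux_key E hE μ hloc r hr y) _
    _ = (E : ℝ≥0∞) * ∫⁻ y, g y ∂μ := by rw [lintegral_mul_const _ hg, mul_comm]

/-- If `(X, d)` has the equal-radius Besicovitch intersection property with constant
`E`, then for every τ-additive locally finite Borel measure of full support and every
`r > 0`, the open-ball averaging operator is bounded on `L¹` with norm at most `E`. -/
theorem averaging_L1_bound_of_equal_radius_besicovitch {X : Type*} [MetricSpace X]
    [MeasurableSpace X] [BorelSpace X] (E : ℕ)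
    (hE : ∀ (ρ : ℝ), 0 < ρ → ∀ (s : Set X) (y : X),
      (∀ x ∈ s, y ∈ Metric.ball x ρ) →
      (s.Pairwise fun a b => ρ ≤ dist a b) → s.Finite ∧ s.ncard ≤ E)
    (μ : Measure X) (hτ : TauAdditive μ)
    (hloc : ∀ s : Set X, Bornology.IsBounded s → μ s < ⊤)
    (hfull : ∀ (x : X) (ρ : ℝ), 0 < ρ → 0 < μ (Metric.ball x ρ))
    (r : ℝ) (hr : 0 < r)
    (g : X → ℝ≥0∞) (hg : Measurable g) (hg1 : ∫⁻ x, g x ∂μ ≠ ⊤) :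
    ∫⁻ x, (μ (Metric.ball x r))⁻¹ * ∫⁻ y in Metric.ball x r, g y ∂μ ∂μ
      ≤ (E : ℝ≥0∞) * ∫⁻ x, g x ∂μ :=
  averaging_main E hE μ hloc hfull r hr g hg
end

section
/- Let (X, d) be a metric space, r > 0, and suppose there is an intersecting Besicovitch family of closed balls of common radius r with cardinality N + 1 (N ≥ 1). Then there exists a finitely supported discrete measure μ on X and a nonnegative function f ∈ L¹(μ) with ‖f‖_{L¹(μ)} = 1 such that ‖A_{r,μ} f‖_{L¹(μ)} > N. In particular, ‖A_{r,μ}‖_{L¹→L¹} > N. -/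
open MeasureTheory Metric Set ENNReal

/-- If a metric space contains an intersecting Besicovitch family of `N + 1` closed
balls of common radius `r`, then there are a finitely supported discrete measure `μ`
and a nonnegative `f` with `‖f‖_{L¹(μ)} = 1` such that `‖A_{r,μ} f‖_{L¹(μ)} > N`. -/
theorem exists_discrete_measure_averaging_norm_gt {X : Type*} [MetricSpace X]
    [MeasurableSpace X] [BorelSpace X]
    (r : ℝ) (hr : 0 < r) (N : ℕ) (hN : 1 ≤ N)
    (x : Fin (N + 1) → X) (y : X)
    (hy : ∀ i, y ∈ Metric.closedBall (x i) r)
    (hsep : ∀ i j, i ≠ j → r < dist (x i) (x j)) :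
    ∃ (μ : Measure X) (t : Finset X) (c : X → ℝ≥0∞) (f : X → ℝ≥0∞),
      μ = ∑ z ∈ t, c z • Measure.dirac z ∧
      (∫⁻ z, f z ∂μ) = 1 ∧
      (N : ℝ≥0∞) <
        ∫⁻ z, (μ (Metric.closedBall z r))⁻¹ *
          ∫⁻ w in Metric.closedBall z r, f w ∂μ ∂μ := by
  classical
  -- basic facts about the points
  have hxi : Function.Injective x := by
    intro i j h
    by_contra hij
    have h1 := hsep i j hij
    rw [h, dist_self] at h1
    linarith
  have hyx : ∀ i, y ≠ x i := by
    intro i hyi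
    haveI : Nontrivial (Fin (N + 1)) := Fin.nontrivial_iff_two_le.mpr (by omega)
    obtain ⟨j, hj⟩ := exists_ne i
    have h1 := hy j
    rw [mem_closedBall, hyi] at h1
    have h2 := hsep i j (Ne.symm hj)
    linarith
  -- the data
  set n2 : ℝ≥0∞ := ((2 * N : ℕ) : ℝ≥0∞) with hn2
  have hn2_ne0 : n2 ≠ 0 := by
    simp [hn2]; omega
  have hn2_net : n2 ≠ ∞ := by rw [hn2]; exact ENNReal.natCast_ne_top _
  set ε : ℝ≥0∞ := n2⁻¹ with hε
  have hε_ne0 : ε ≠ 0 := by simp [hε, hn2_net]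
  have hε_net : ε ≠ ∞ := by simp [hε, hn2_ne0]
  set t : Finset X := insert y (Finset.image x Finset.univ) with ht
  set c : X → ℝ≥0∞ := fun z => if z = y then ε else 1 with hc
  set f : X → ℝ≥0∞ := fun z => if z = y then n2 else 0 with hf
  set μ : Measure X := ∑ z ∈ t, c z • Measure.dirac z with hμdef
  have hynotmem : y ∉ Finset.image x Finset.univ := by
    simp only [Finset.mem_image, Finset.mem_univ, true_and]
    rintro ⟨i, hi⟩
    exact hyx i hi.symm
  have hμ : μ = ε • Measure.dirac y + ∑ i, Measure.dirac (x i) := by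
    rw [hμdef, ht, Finset.sum_insert hynotmem,
      Finset.sum_image (fun a _ b _ h => hxi h)]
    congr 1
    · simp [hc]
    · refine Finset.sum_congr rfl fun i _ => ?_
      rw [hc]
      simp [Ne.symm (hyx i)]
  -- integral formula
  have hlint : ∀ g : X → ℝ≥0∞, ∫⁻ z, g z ∂μ = ε * g y + ∑ i, g (x i) := by
    intro g
    rw [hμ, lintegral_add_measure, lintegral_smul_measure, lintegral_dirac,
      lintegral_finset_sum_measure]
    simp [lintegral_dirac, smul_eq_mul]
  -- measure of sets
  have hμs : ∀ s : Set X, μ s = ε * s.indicator 1 y + ∑ i, s.indicator 1 (x i) := by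
    intro s
    rw [hμ]
    simp [Measure.finset_sum_apply, Measure.dirac_apply, smul_eq_mul]
  have hμy : μ {y} = ε := by
    rw [hμs]
    have : ∀ i : Fin (N + 1), ({y} : Set X).indicator (1 : X → ℝ≥0∞) (x i) = 0 := by
      intro i
      simp [Set.indicator_apply, Ne.symm (hyx i)]
    simp [this]
  have hμball : ∀ i, μ (Metric.closedBall (x i) r) = ε + 1 := by
    intro i
    rw [hμs]
    have h1 : (Metric.closedBall (x i) r).indicator (1 : X → ℝ≥0∞) y = 1 := by
      simp [Set.indicator_apply, hy i]
    have h2 : ∀ j : Fin (N + 1),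
        (Metric.closedBall (x i) r).indicator (1 : X → ℝ≥0∞) (x j)
          = if j = i then 1 else 0 := by
      intro j
      by_cases hji : j = i
      · simp [hji, Set.indicator_apply, hr.le]
      · have := hsep j i hji
        simp [Set.indicator_apply, hji, mem_closedBall, not_le.mpr this]
    simp [h1, h2]
  -- inner integral over a ball containing y equals 1
  have hinner : ∀ z : X, y ∈ Metric.closedBall z r →
      (∫⁻ w in Metric.closedBall z r, f w ∂μ) = 1 := by
    intro z hz
    have hfi : f = Set.indicator {y} (fun _ => n2) := by
      funext w
      simp [hf, Set.indicator_apply]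
    rw [hfi, lintegral_indicator (measurableSet_singleton y), setLIntegral_const,
      Measure.restrict_apply (measurableSet_singleton y),
      Set.inter_eq_self_of_subset_left (Set.singleton_subset_iff.mpr hz), hμy]
    exact ENNReal.mul_inv_cancel hn2_ne0 hn2_net
  refine ⟨μ, t, c, f, rfl, ?_, ?_⟩
  · -- total integral of f is 1
    rw [hlint f]
    have h0 : ∀ i : Fin (N + 1), f (x i) = 0 := by
      intro i; simp [hf, Ne.symm (hyx i)]
    rw [Finset.sum_eq_zero (fun i _ => h0 i), add_zero]
    have hfy : f y = n2 := by simp [hf]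
    rw [hfy]
    exact ENNReal.inv_mul_cancel hn2_ne0 hn2_net
  · -- the main inequality
    rw [hlint]
    have hterm : ∀ i : Fin (N + 1),
        (μ (Metric.closedBall (x i) r))⁻¹ *
          ∫⁻ w in Metric.closedBall (x i) r, f w ∂μ = (ε + 1)⁻¹ := by
      intro i
      rw [hμball i, hinner (x i) (hy i), mul_one]
    have hsum : (∑ i : Fin (N + 1), (μ (Metric.closedBall (x i) r))⁻¹ *
          ∫⁻ w in Metric.closedBall (x i) r, f w ∂μ)
        = (N + 1 : ℕ) * (ε + 1)⁻¹ := by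
      rw [Finset.sum_congr rfl fun i _ => hterm i]
      simp [Finset.card_univ]
    have hkey : (N : ℝ≥0∞) < (N + 1 : ℕ) * (ε + 1)⁻¹ := by
      have hεadd_ne0 : (ε + 1 : ℝ≥0∞) ≠ 0 := by simp
      have hεadd_net : (ε + 1 : ℝ≥0∞) ≠ ∞ := by
        simp [ENNReal.add_ne_top, hε_net]
      have hlt : (N : ℝ≥0∞) * (ε + 1) < (N + 1 : ℕ) := by
        have hNε : (N : ℝ≥0∞) * ε = 2⁻¹ := by
          rw [hε, hn2]
          push_cast
          rw [ENNReal.mul_inv (Or.inl (by norm_num)) (Or.inl (by norm_num)),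
            ← mul_assoc, mul_comm (N : ℝ≥0∞) (2 : ℝ≥0∞)⁻¹, mul_assoc,
            ENNReal.mul_inv_cancel (Nat.cast_ne_zero.mpr (by omega) : (N : ℝ≥0∞) ≠ 0) (by simp), mul_one]
        rw [mul_add, hNε, mul_one]
        push_cast
        rw [add_comm (2⁻¹ : ℝ≥0∞) (N : ℝ≥0∞)]
        exact ENNReal.add_lt_add_left (by simp) (by
          exact ENNReal.inv_lt_one.mpr one_lt_two)
      calc (N : ℝ≥0∞) = (N : ℝ≥0∞) * (ε + 1) * (ε + 1)⁻¹ := by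
            rw [mul_assoc, ENNReal.mul_inv_cancel hεadd_ne0 hεadd_net, mul_one]
        _ < (N + 1 : ℕ) * (ε + 1)⁻¹ :=
            ENNReal.mul_lt_mul_left (by simp [hεadd_net]) (by simp [hεadd_ne0]) hlt
    calc (N : ℝ≥0∞) < (N + 1 : ℕ) * (ε + 1)⁻¹ := hkey
      _ = ∑ i : Fin (N + 1), (μ (Metric.closedBall (x i) r))⁻¹ *
          ∫⁻ w in Metric.closedBall (x i) r, f w ∂μ := hsum.symm
      _ ≤ _ := le_add_self
end

section
/- Let (X, d) be a metric space with equal-radius Besicovitch constant exactly E (finite and attained in the supremum over finite families). Then the supremum over r > 0 and all τ-additive locally finite Borel measures μ of the weak type (1,1) norm of A_{r,μ} equals E, that is, sup_{r,μ} ‖A_{r,μ}‖_{L¹→L^{1,∞}} = E. -/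
open MeasureTheory Metric Set ENNReal

/-- Bounded overlap: a finite `r`-separated family of closed `r`-balls covers each
point at most `E` times. -/
lemma overlap_bound {X : Type*} [MetricSpace X] (E : ℕ)
    (hEbound : ∀ (r : ℝ), 0 < r → ∀ (s : Set X) (y : X),
      (∀ x ∈ s, y ∈ Metric.closedBall x r) →
      (s.Pairwise fun a b => r < dist a b) → s.Finite ∧ s.ncard ≤ E)
    {r : ℝ} (hr : 0 < r) (t : Finset X)
    (hsep : (↑t : Set X).Pairwise fun a b => r < dist a b) (w : X) :
    (∑ z ∈ t, (Metric.closedBall z r).indicator (1 : X → ℝ≥0∞) w) ≤ E := by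
  classical
  have h1 : (∑ z ∈ t, (Metric.closedBall z r).indicator (1 : X → ℝ≥0∞) w)
      = ((t.filter fun z => w ∈ Metric.closedBall z r).card : ℝ≥0∞) := by
    rw [← Finset.sum_boole]
    refine Finset.sum_congr rfl fun z _ => ?_
    by_cases h : w ∈ Metric.closedBall z r <;> simp [h]
  rw [h1]
  have hmem : ∀ x ∈ (↑(t.filter fun z => w ∈ Metric.closedBall z r) : Set X),
      w ∈ Metric.closedBall x r := by
    intro x hx
    simp only [Finset.coe_filter, mem_setOf_eq] at hx
    exact hx.2
  have hsub : (↑(t.filter fun z => w ∈ Metric.closedBall z r) : Set X) ⊆ (↑t : Set X) := by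
    intro x hx
    simp only [Finset.coe_filter, mem_setOf_eq] at hx
    exact hx.1
  have h2 := hEbound r hr (↑(t.filter fun z => w ∈ Metric.closedBall z r)) w hmem
    (hsep.mono hsub)
  have h3 := h2.2
  rw [Set.ncard_coe_finset] at h3
  exact_mod_cast h3

/-- If the equal-radius Besicovitch constant of `(X, d)` equals `E` (finite and
attained), then the supremum over `r` and `μ` of the weak type `(1,1)` norms of the
averaging operators equals `E`: the weak `(1,1)` inequality holds with constant `E`
for all admissible `μ`, and no constant `c < E` works uniformly (already for
finitely supported discrete measures). -/
theorem sup_weak_norm_averaging_eq_equal_radius_besicovitch {X : Type*} [MetricSpace X]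
    [MeasurableSpace X] [BorelSpace X] (E : ℕ)
    (hEbound : ∀ (r : ℝ), 0 < r → ∀ (s : Set X) (y : X),
      (∀ x ∈ s, y ∈ Metric.closedBall x r) →
      (s.Pairwise fun a b => r < dist a b) → s.Finite ∧ s.ncard ≤ E)
    (hEatt : ∃ (r : ℝ), 0 < r ∧ ∃ (s : Set X) (y : X),
      (∀ x ∈ s, y ∈ Metric.closedBall x r) ∧
      (s.Pairwise fun a b => r < dist a b) ∧ s.Finite ∧ s.ncard = E) :
    (∀ (r : ℝ), 0 < r → ∀ μ : Measure X, TauAdditive μ →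
      (∀ s : Set X, Bornology.IsBounded s → μ s < ⊤) →
      ∀ (f : X → ℝ≥0∞), Measurable f → ∀ α : ℝ≥0∞,
        α * μ {z | α ≤ (μ (Metric.closedBall z r))⁻¹ *
            ∫⁻ w in Metric.closedBall z r, f w ∂μ}
          ≤ (E : ℝ≥0∞) * ∫⁻ z, f z ∂μ) ∧
    (∀ c : ℝ≥0∞, c < (E : ℝ≥0∞) →
      ∃ (r : ℝ), 0 < r ∧ ∃ (μ : Measure X) (t : Finset X) (w : X → ℝ≥0∞)
        (f : X → ℝ≥0∞) (α : ℝ≥0∞),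
        μ = ∑ z ∈ t, w z • Measure.dirac z ∧
        c * ∫⁻ z, f z ∂μ <
          α * μ {z | α ≤ (μ (Metric.closedBall z r))⁻¹ *
            ∫⁻ u in Metric.closedBall z r, f u ∂μ}) := by
  classical
  constructor
  · -- upper bound: weak (1,1) with constant E
    intro r hr μ hτ hfin f hf α
    set S := {z : X | α ≤ (μ (Metric.closedBall z r))⁻¹ *
        ∫⁻ w in Metric.closedBall z r, f w ∂μ} with hSdef
    rcases eq_or_ne α 0 with rfl | hα0
    · simp
    rcases isEmpty_or_nonempty X with hX | hX
    · rw [Set.eq_empty_of_isEmpty S, measure_empty, mul_zero]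
      exact zero_le
    have hball_fin : ∀ z : X, μ (Metric.closedBall z r) ≠ ⊤ :=
      fun z => (hfin _ isBounded_closedBall).ne
    have hpos : ∀ z ∈ S, μ (Metric.closedBall z r) ≠ 0 := by
      intro z hz h0
      rw [hSdef, mem_setOf_eq, setLIntegral_measure_zero _ _ h0, mul_zero] at hz
      exact hα0 (le_antisymm hz zero_le)
    have hkey : ∀ z ∈ S, α * μ (Metric.closedBall z r)
        ≤ ∫⁻ w in Metric.closedBall z r, f w ∂μ := by
      intro z hz
      have h1 : α * μ (Metric.closedBall z r)
          ≤ ((μ (Metric.closedBall z r))⁻¹ *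
              ∫⁻ w in Metric.closedBall z r, f w ∂μ) * μ (Metric.closedBall z r) :=
        mul_le_mul_left hz _
      calc α * μ (Metric.closedBall z r) ≤ _ := h1
        _ = ∫⁻ w in Metric.closedBall z r, f w ∂μ := by
          rw [mul_comm, ← mul_assoc, ENNReal.mul_inv_cancel (hpos z hz) (hball_fin z), one_mul]
    -- sum bound for finite separated families inside S
    have hsum : ∀ u : Finset X, (↑u : Set X) ⊆ S →
        ((↑u : Set X).Pairwise fun a b => r < dist a b) →
        α * ∑ z ∈ u, μ (Metric.closedBall z r) ≤ (E : ℝ≥0∞) * ∫⁻ z, f z ∂μ := by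
      intro u hu husep
      have hmeas : ∀ z : X, MeasurableSet (Metric.closedBall z r) :=
        fun z => measurableSet_closedBall
      calc α * ∑ z ∈ u, μ (Metric.closedBall z r)
          = ∑ z ∈ u, α * μ (Metric.closedBall z r) := Finset.mul_sum _ _ _
        _ ≤ ∑ z ∈ u, ∫⁻ w in Metric.closedBall z r, f w ∂μ :=
            Finset.sum_le_sum fun z hz => hkey z (hu hz)
        _ = ∑ z ∈ u, ∫⁻ w, (Metric.closedBall z r).indicator f w ∂μ := by
            refine Finset.sum_congr rfl fun z _ => ?_
            rw [lintegral_indicator (hmeas z)]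
        _ = ∫⁻ w, ∑ z ∈ u, (Metric.closedBall z r).indicator f w ∂μ :=
            (lintegral_finset_sum _ fun z _ => hf.indicator (hmeas z)).symm
        _ ≤ ∫⁻ w, (E : ℝ≥0∞) * f w ∂μ := by
            refine lintegral_mono fun w => ?_
            have heq : ∀ z : X, (Metric.closedBall z r).indicator f w
                = (Metric.closedBall z r).indicator (1 : X → ℝ≥0∞) w * f w := by
              intro z
              by_cases h : w ∈ Metric.closedBall z r <;> simp [h]
            simp only [heq]
            rw [← Finset.sum_mul]
            exact mul_le_mul_left (overlap_bound E hEbound hr u husep w) _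
        _ = (E : ℝ≥0∞) * ∫⁻ w, f w ∂μ := lintegral_const_mul _ hf
    -- maximal separated subset via Zorn
    obtain ⟨D, hD⟩ := zorn_subset
        {D : Set X | D ⊆ S ∧ D.Pairwise fun a b => r < dist a b} (by
      intro c hc hchain
      refine ⟨⋃₀ c, ⟨?_, ?_⟩, fun s hs => subset_sUnion_of_mem hs⟩
      · exact sUnion_subset fun s hs => (hc hs).1
      · intro a ha b hb hab
        obtain ⟨s1, hs1, ha1⟩ := ha
        obtain ⟨s2, hs2, hb2⟩ := hb
        rcases eq_or_ne s1 s2 with rfl | hne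
        · exact (hc hs1).2 ha1 hb2 hab
        · rcases hchain hs1 hs2 hne with h | h
          · exact (hc hs2).2 (h ha1) hb2 hab
          · exact (hc hs1).2 ha1 (h hb2) hab)
    have hDS : D ⊆ S := hD.prop.1
    have hDsep : D.Pairwise fun a b => r < dist a b := hD.prop.2
    have hDmax : ∀ D', D' ⊆ S → (D'.Pairwise fun a b => r < dist a b) → D ⊆ D' → D' ⊆ D :=
      fun D' h1 h2 h3 => hD.2 ⟨h1, h2⟩ h3
    have hrsym : Symmetric (fun a b : X => r < dist a b) := by
      intro a b h; rwa [dist_comm]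
    have hcover : S ⊆ ⋃ x ∈ D, Metric.closedBall x r := by
      intro z hz
      by_contra h
      simp only [mem_iUnion, not_exists] at h
      have hzD : insert z D ∈ {D : Set X | D ⊆ S ∧ D.Pairwise fun a b => r < dist a b} := by
        constructor
        · exact insert_subset hz hDS
        · rw [@Set.pairwise_insert_of_symmetric _ _ _ _ ⟨fun _ _ h => hrsym h⟩]
          refine ⟨hDsep, fun b hb hne => ?_⟩
          have h2 := h b hb
          simp only [Metric.mem_closedBall, not_le] at h2
          exact h2
      have : insert z D ⊆ D := hDmax _ hzD.1 hzD.2 (subset_insert z D)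
      exact (h z (this (mem_insert z D))) (Metric.mem_closedBall_self hr.le)
    -- the main δ-estimate
    have hmain : ∀ δ : ℝ≥0∞, 0 < δ → δ ≠ ⊤ →
        α * μ S ≤ (1 + δ) * ((E : ℝ≥0∞) * ∫⁻ z, f z ∂μ) := by
      intro δ hδ hδtop
      -- choose enlarged radii
      have hchoose : ∀ z : X, z ∈ D → ∃ ρ : ℝ, r < ρ ∧
          μ (Metric.ball z ρ) ≤ (1 + δ) * μ (Metric.closedBall z r) := by
        intro z hz
        have hB0 := hpos z (hDS hz)
        have hBtop := hball_fin z
        have hiInter : (⋂ n : ℕ, Metric.ball z (r + 1 / (n + 1))) = Metric.closedBall z r := by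
          ext w
          simp only [mem_iInter, Metric.mem_ball, Metric.mem_closedBall]
          constructor
          · intro h
            by_contra hcon
            push_neg at hcon
            obtain ⟨n, hn⟩ := exists_nat_one_div_lt (sub_pos.mpr hcon)
            have := h n
            linarith
          · intro h n
            have : (0 : ℝ) < 1 / (n + 1) := by positivity
            linarith
        have htend : Filter.Tendsto (fun n : ℕ => μ (Metric.ball z (r + 1 / (n + 1))))
            Filter.atTop (nhds (μ (Metric.closedBall z r))) := by
          rw [← hiInter]
          refine tendsto_measure_iInter_atTop
            (fun n => measurableSet_ball.nullMeasurableSet) ?_ ⟨0, ?_⟩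
          · intro m n hmn
            apply Metric.ball_subset_ball
            have : (1 : ℝ) / (n + 1) ≤ 1 / (m + 1) := by
              apply one_div_le_one_div_of_le (by positivity)
              exact_mod_cast by omega
            linarith
          · exact (hfin _ isBounded_ball).ne
        have hlt : μ (Metric.closedBall z r) < (1 + δ) * μ (Metric.closedBall z r) := by
          nth_rewrite 1 [← one_mul (μ (Metric.closedBall z r))]
          exact ENNReal.mul_lt_mul_left hB0 hBtop (ENNReal.lt_add_right one_ne_top hδ.ne')
        obtain ⟨n, hn⟩ := (htend.eventually_lt_const hlt).exists
        refine ⟨r + 1 / (n + 1), ?_, hn.le⟩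
        have hpos' : (0 : ℝ) < 1 / ((n : ℝ) + 1) := by positivity
        linarith
      choose! ρ hρ1 hρ2 using hchoose
      set A : Set (Set X) := (fun z => Metric.ball z (ρ z)) '' D with hA
      have hAopen : ∀ O ∈ A, IsOpen O := by
        rintro O ⟨z, hz, rfl⟩; exact isOpen_ball
      have hScover : S ⊆ ⋃₀ A := by
        intro z hz
        obtain ⟨x, hxD, hxz⟩ := by simpa using hcover hz
        refine ⟨Metric.ball x (ρ x), ⟨x, hxD, rfl⟩, ?_⟩
        exact Metric.mem_ball.mpr (lt_of_le_of_lt hxz (hρ1 x hxD))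
      have hμS : μ S ≤ μ (⋃₀ A) := measure_mono hScover
      rw [hτ A hAopen] at hμS
      have : α * μ S ≤ ⨆ (t : Finset (Set X)) (_ : ↑t ⊆ A), α * μ (⋃ O ∈ t, (O : Set X)) := by
        calc α * μ S ≤ α * ⨆ (t : Finset (Set X)) (_ : ↑t ⊆ A), μ (⋃ O ∈ t, (O : Set X)) :=
              mul_le_mul_right hμS _
          _ = _ := by simp only [ENNReal.mul_iSup]
      refine this.trans (iSup₂_le fun t ht => ?_)
      -- replace each open set by its center
      have hrep : ∀ O ∈ t, ∃ z, z ∈ D ∧ Metric.ball z (ρ z) = O := by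
        intro O hO
        obtain ⟨z, hz, rfl⟩ := ht hO
        exact ⟨z, hz, rfl⟩
      choose! g hg1 hg2 using hrep
      set u : Finset X := t.image g with hu
      have huD : ∀ z ∈ u, z ∈ D := by
        intro z hz
        obtain ⟨O, hO, rfl⟩ := Finset.mem_image.mp hz
        exact hg1 O hO
      have hcover2 : (⋃ O ∈ t, (O : Set X)) ⊆ ⋃ z ∈ u, Metric.ball z (ρ z) := by
        intro w hw
        obtain ⟨O, hO, hwO⟩ := by simpa using hw
        refine mem_biUnion (Finset.mem_image_of_mem g hO) ?_
        rw [hg2 O hO]; exact hwO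
      calc α * μ (⋃ O ∈ t, (O : Set X)) ≤ α * μ (⋃ z ∈ u, Metric.ball z (ρ z)) :=
            mul_le_mul_right (measure_mono hcover2) _
        _ ≤ α * ∑ z ∈ u, μ (Metric.ball z (ρ z)) :=
            mul_le_mul_right (measure_biUnion_finset_le u _) _
        _ ≤ α * ∑ z ∈ u, (1 + δ) * μ (Metric.closedBall z r) :=
            mul_le_mul_right (Finset.sum_le_sum fun z hz => hρ2 z (huD z hz)) _
        _ = (1 + δ) * (α * ∑ z ∈ u, μ (Metric.closedBall z r)) := by
            rw [← Finset.mul_sum]; ring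
        _ ≤ (1 + δ) * ((E : ℝ≥0∞) * ∫⁻ z, f z ∂μ) := by
            refine mul_le_mul_right (hsum u ?_ ?_) _
            · intro z hz; exact hDS (huD z (by exact_mod_cast hz))
            · exact hDsep.mono (fun z hz => huD z (by exact_mod_cast hz))
    -- conclude by letting δ → 0
    set b := (E : ℝ≥0∞) * ∫⁻ z, f z ∂μ with hb
    rcases eq_or_ne b ⊤ with hbt | hbt
    · rw [hbt]; exact le_top
    refine ENNReal.le_of_forall_pos_le_add fun ε hε _ => ?_
    rcases eq_or_ne b 0 with hb0 | hb0
    · have := hmain 1 one_pos one_ne_top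
      rw [hb0] at this ⊢
      simpa using this.trans (by simp)
    · have hδpos : (0 : ℝ≥0∞) < (ε : ℝ≥0∞) / b :=
        ENNReal.div_pos (by exact_mod_cast hε.ne') hbt
      have hδtop : (ε : ℝ≥0∞) / b ≠ ⊤ := by
        simp [ENNReal.div_eq_top, hb0]
      have := hmain _ hδpos hδtop
      calc α * μ S ≤ (1 + (ε : ℝ≥0∞) / b) * b := this
        _ = b + (ε : ℝ≥0∞) / b * b := by rw [add_mul, one_mul]
        _ = b + ε := by rw [ENNReal.div_mul_cancel hb0 hbt]
  · -- lower bound: no constant below E works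
    intro c hc
    obtain ⟨r, hr, s, y, hy, hsep, hsfin, hscard⟩ := hEatt
    have hE0 : 0 < E := by
      rcases Nat.eq_zero_or_pos E with h | h
      · subst h; simp at hc
      · exact h
    by_cases hys : y ∈ s
    · -- then s = {y} and E = 1
      have hsy : s = {y} := by
        refine Set.eq_singleton_iff_unique_mem.mpr ⟨hys, fun x hx => ?_⟩
        by_contra hne
        have h1 := hsep hx hys hne
        have h2 := hy x hx
        rw [Metric.mem_closedBall, dist_comm] at h2
        linarith
      have hE1 : E = 1 := by
        rw [hsy, Set.ncard_singleton] at hscard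
        omega
      refine ⟨r, hr, _, ({y} : Finset X), fun _ => 1,
        ({y} : Set X).indicator 1, 1, rfl, ?_⟩
      have hμ : (∑ z ∈ ({y} : Finset X), (fun _ : X => (1 : ℝ≥0∞)) z • Measure.dirac z)
          = Measure.dirac y := by
        simp
      rw [hμ]
      have hfy : ({y} : Set X).indicator (1 : X → ℝ≥0∞) y = 1 := by simp
      have hint : ∫⁻ z, ({y} : Set X).indicator (1 : X → ℝ≥0∞) z ∂(Measure.dirac y) = 1 := by
        rw [lintegral_dirac]; exact hfy
      have hmemS : y ∈ {z : X | (1:ℝ≥0∞) ≤ (Measure.dirac y (Metric.closedBall z r))⁻¹ *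
          ∫⁻ u in Metric.closedBall z r, ({y} : Set X).indicator 1 u ∂(Measure.dirac y)} := by
        have hyB : y ∈ Metric.closedBall y r := Metric.mem_closedBall_self hr.le
        have h1 : Measure.dirac y (Metric.closedBall y r) = 1 := by
          rw [Measure.dirac_apply]
          simp [Set.indicator_of_mem hyB]
        have h2 : ∫⁻ u in Metric.closedBall y r, ({y} : Set X).indicator 1 u
            ∂(Measure.dirac y) = 1 := by
          rw [← lintegral_indicator measurableSet_closedBall, lintegral_dirac]
          simp [Set.indicator_of_mem hyB]
        simp only [mem_setOf_eq, h1, h2, inv_one, one_mul, le_refl]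
      have hS1 : (1:ℝ≥0∞) ≤ Measure.dirac y {z : X |
          (1:ℝ≥0∞) ≤ (Measure.dirac y (Metric.closedBall z r))⁻¹ *
          ∫⁻ u in Metric.closedBall z r, ({y} : Set X).indicator 1 u ∂(Measure.dirac y)} := by
        rw [Measure.dirac_apply]
        rw [Set.indicator_of_mem hmemS]
        rfl
      rw [hint, mul_one, one_mul]
      exact lt_of_lt_of_le (by simpa [hE1] using hc) hS1
    · -- main case : y ∉ s
      obtain ⟨q, hq1, hq2⟩ := ENNReal.lt_iff_exists_nnreal_btwn.mp hc
      have hq0 : 0 < q := by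
        rcases eq_or_ne q 0 with rfl | h
        · simp at hq1
        · exact pos_iff_ne_zero.mpr h
      have hqE : q < (E : NNReal) := by exact_mod_cast hq2
      set ε : NNReal := (E : NNReal) / q - 1 with hεdef
      have h1le : (1 : NNReal) < (E : NNReal) / q := (one_lt_div hq0).mpr hqE
      have hε0 : 0 < ε := tsub_pos_of_lt h1le
      have h1ε : (1 : NNReal) + ε = (E : NNReal) / q := add_tsub_cancel_of_le h1le.le
      have hone : (1 : ℝ≥0∞) + (ε : ℝ≥0∞) = (((1 : NNReal) + ε : NNReal) : ℝ≥0∞) := by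
        rw [ENNReal.coe_add, ENNReal.coe_one]
      have h1ε0 : ((1 : ℝ≥0∞) + (ε : ℝ≥0∞)) ≠ 0 := by simp
      have h1εtop : ((1 : ℝ≥0∞) + (ε : ℝ≥0∞)) ≠ ⊤ := by
        rw [hone]; exact ENNReal.coe_ne_top
      have hcE : c * (1 + (ε : ℝ≥0∞)) < (E : ℝ≥0∞) := by
        calc c * (1 + (ε : ℝ≥0∞)) < (q : ℝ≥0∞) * (1 + (ε : ℝ≥0∞)) :=
              ENNReal.mul_lt_mul_left h1ε0 h1εtop hq1
          _ = (E : ℝ≥0∞) := by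
              rw [hone, ← ENNReal.coe_mul, h1ε, mul_comm, div_mul_cancel₀ _ hq0.ne']
              simp
      -- the measure
      set sF : Finset X := hsfin.toFinset with hsFdef
      have hysF : y ∉ sF := by
        rw [hsFdef, Set.Finite.mem_toFinset]; exact hys
      have hcard : (sF.card : ℝ≥0∞) = (E : ℝ≥0∞) := by
        have := Set.ncard_eq_toFinset_card s hsfin
        rw [← hsFdef] at this
        rw [← hscard, this]
      set w : X → ℝ≥0∞ := fun z => if z = y then (ε : ℝ≥0∞) else 1 with hwdef
      set t : Finset X := insert y sF with htdef
      set f : X → ℝ≥0∞ := ({y} : Set X).indicator 1 with hfdef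
      set μ₀ : Measure X := ∑ z ∈ t, w z • Measure.dirac z with hμdef
      have hwsF : ∀ g : X → ℝ≥0∞, ∀ z ∈ sF, w z * g z = g z := by
        intro g z hz
        have hzy : z ≠ y := fun h => hysF (h ▸ hz)
        simp [hwdef, hzy]
      have hlint : ∀ g : X → ℝ≥0∞, ∫⁻ z, g z ∂μ₀ = (ε : ℝ≥0∞) * g y + ∑ z ∈ sF, g z := by
        intro g
        rw [hμdef, lintegral_finset_sum_measure]
        have : ∀ z ∈ t, ∫⁻ a, g a ∂(w z • Measure.dirac z) = w z * g z := by
          intro z _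
          rw [lintegral_smul_measure, lintegral_dirac, smul_eq_mul]
        rw [Finset.sum_congr rfl this, htdef, Finset.sum_insert hysF,
          Finset.sum_congr rfl (hwsF g)]
        simp [hwdef]
      have happly : ∀ A : Set X, μ₀ A = (ε : ℝ≥0∞) * A.indicator 1 y
          + ∑ z ∈ sF, A.indicator 1 z := by
        intro A
        rw [hμdef, Measure.finset_sum_apply]
        have : ∀ z ∈ t, (w z • Measure.dirac z) A = w z * A.indicator 1 z := by
          intro z _
          rw [Measure.smul_apply, Measure.dirac_apply, smul_eq_mul]
        rw [Finset.sum_congr rfl this, htdef, Finset.sum_insert hysF,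
          Finset.sum_congr rfl (hwsF fun z => A.indicator 1 z)]
        simp [hwdef]
      have hsetint : ∀ B : Set X, MeasurableSet B →
          ∫⁻ u in B, f u ∂μ₀ = (ε : ℝ≥0∞) * B.indicator f y + ∑ z ∈ sF, B.indicator f z := by
        intro B hB
        rw [← lintegral_indicator hB, hlint]
      have hfz : ∀ z ∈ sF, f z = 0 := by
        intro z hz
        have hzy : z ≠ y := fun h => hysF (h ▸ hz)
        simp [hfdef, hzy]
      -- total integral of f
      have hintf : ∫⁻ z, f z ∂μ₀ = (ε : ℝ≥0∞) := by
        rw [hlint]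
        rw [Finset.sum_congr rfl hfz]
        simp [hfdef]
      set α : ℝ≥0∞ := ((ε : ℝ≥0∞) + 1)⁻¹ * (ε : ℝ≥0∞) with hαdef
      -- each x ∈ s belongs to the superlevel set
      have hmem : ∀ x ∈ sF, x ∈ {z : X | α ≤ (μ₀ (Metric.closedBall z r))⁻¹ *
          ∫⁻ u in Metric.closedBall z r, f u ∂μ₀} := by
        intro x hxF
        have hxs : x ∈ s := by rwa [hsFdef, Set.Finite.mem_toFinset] at hxF
        have hyB : y ∈ Metric.closedBall x r := hy x hxs
        have hxB : x ∈ Metric.closedBall x r := Metric.mem_closedBall_self hr.le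
        have hB1 : μ₀ (Metric.closedBall x r) = (ε : ℝ≥0∞) + 1 := by
          rw [happly]
          have hsum1 : ∑ z ∈ sF, (Metric.closedBall x r).indicator (1 : X → ℝ≥0∞) z = 1 := by
            rw [Finset.sum_eq_single_of_mem x hxF]
            · simp [Set.indicator_of_mem hxB]
            · intro b hb hbx
              have hbs : b ∈ s := by rwa [hsFdef, Set.Finite.mem_toFinset] at hb
              have : r < dist b x := hsep hbs hxs hbx
              have hbB : b ∉ Metric.closedBall x r := by
                rw [Metric.mem_closedBall]; linarith
              simp [Set.indicator_of_notMem hbB]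
          rw [hsum1, Set.indicator_of_mem hyB]
          simp
        have hB2 : ∫⁻ u in Metric.closedBall x r, f u ∂μ₀ = (ε : ℝ≥0∞) := by
          rw [hsetint _ measurableSet_closedBall]
          have hz0 : ∀ z ∈ sF, (Metric.closedBall x r).indicator f z = 0 := by
            intro z hz
            have := hfz z hz
            by_cases hmem : z ∈ Metric.closedBall x r
            · rw [Set.indicator_of_mem hmem, this]
            · rw [Set.indicator_of_notMem hmem]
          rw [Finset.sum_congr rfl hz0, Set.indicator_of_mem hyB]
          simp [hfdef]
        rw [mem_setOf_eq, hB1, hB2, hαdef]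
      -- the measure of the superlevel set is at least E
      have hμS : (E : ℝ≥0∞) ≤ μ₀ {z : X | α ≤ (μ₀ (Metric.closedBall z r))⁻¹ *
          ∫⁻ u in Metric.closedBall z r, f u ∂μ₀} := by
        rw [happly]
        have : ∑ z ∈ sF, ({z : X | α ≤ (μ₀ (Metric.closedBall z r))⁻¹ *
            ∫⁻ u in Metric.closedBall z r, f u ∂μ₀}).indicator (1 : X → ℝ≥0∞) z
            = (sF.card : ℝ≥0∞) := by
          rw [Finset.sum_congr rfl fun z hz => Set.indicator_of_mem (hmem z hz) _]
          simp
        rw [this, hcard]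
        exact le_add_self
      refine ⟨r, hr, μ₀, t, w, f, α, hμdef, ?_⟩
      have hε0' : (ε : ℝ≥0∞) ≠ 0 := by exact_mod_cast hε0.ne'
      have hεtop : (ε : ℝ≥0∞) ≠ ⊤ := ENNReal.coe_ne_top
      have hα0 : α ≠ 0 := by
        rw [hαdef]
        apply mul_ne_zero _ hε0'
        rw [ENNReal.inv_ne_zero]
        exact (ENNReal.add_lt_top.mpr ⟨ENNReal.coe_lt_top, one_lt_top⟩).ne
      have hαtop : α ≠ ⊤ := by
        rw [hαdef]
        exact ENNReal.mul_ne_top (by simp [ENNReal.inv_ne_top, hε0']) hεtop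
      have h1ε' : (1 : ℝ≥0∞) + (ε : ℝ≥0∞) = (ε : ℝ≥0∞) + 1 := add_comm _ _
      calc c * ∫⁻ z, f z ∂μ₀ = c * (ε : ℝ≥0∞) := by rw [hintf]
        _ = c * (1 + (ε : ℝ≥0∞)) * α := by
            rw [hαdef, h1ε', mul_assoc, ← mul_assoc ((ε : ℝ≥0∞) + 1),
              ENNReal.mul_inv_cancel (by simp) (by rw [← h1ε']; exact h1εtop), one_mul]
        _ < (E : ℝ≥0∞) * α := ENNReal.mul_lt_mul_left hα0 hαtop hcE
        _ = α * (E : ℝ≥0∞) := mul_comm _ _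
        _ ≤ α * μ₀ _ := mul_le_mul_right hμS _
end

section
/- Let (X, d) be a metric space, 1 < p < ∞, N ≥ 1 an integer, and suppose that for every finitely supported discrete Borel measure μ on X and every r > 0 the averaging operator satisfies the weak type (p,p) bound ‖A_{r,μ}‖_{L^p → L^{p,∞}} ≤ N. Then (X, d) has the equal-radius Besicovitch intersection property with constant at most ⌊p^p (p−1)^{1−p} N^p⌋. -/
open MeasureTheory Metric Set ENNReal

private lemma besicovitch_K_ge_one {p : ℝ} (hp : 1 < p) {N : ℕ} (hN : 1 ≤ N) :
    (1 : ℝ) ≤ p ^ p * (p - 1) ^ (1 - p) * (N : ℝ) ^ p := by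
  have hp0 : (0:ℝ) < p := by linarith
  have h1 : (1:ℝ) ≤ (N : ℝ) ^ p := by
    calc (1:ℝ) = (1:ℝ) ^ p := (Real.one_rpow p).symm
    _ ≤ (N : ℝ) ^ p := by
        apply Real.rpow_le_rpow zero_le_one (by exact_mod_cast hN) hp0.le
  have h2 : p ^ (1 - p) ≤ (p - 1) ^ (1 - p) :=
    Real.rpow_le_rpow_of_nonpos (by linarith) (by linarith) (by linarith)
  have h3 : p ^ p * p ^ (1 - p) = p := by
    rw [← Real.rpow_add hp0]; simp
  have hpp : (0:ℝ) ≤ p ^ p := (Real.rpow_pos_of_pos hp0 p).le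
  nlinarith [Real.rpow_pos_of_pos hp0 p, mul_le_mul_of_nonneg_left h2 hpp]

private lemma besicovitch_card_bound {X : Type*} [MetricSpace X]
    [MeasurableSpace X] [BorelSpace X]
    (p : ℝ) (hp : 1 < p) (N : ℕ) (hN : 1 ≤ N)
    (hweak : ∀ μ : Measure X,
      (∃ (t : Finset X) (w : X → ℝ≥0∞), μ = ∑ z ∈ t, w z • Measure.dirac z) →
      ∀ (r : ℝ), 0 < r → ∀ (f : X → ℝ≥0∞) (α : ℝ≥0∞), 0 < α →
        α ^ p * μ {z | α ≤ (μ (Metric.closedBall z r))⁻¹ *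
            ∫⁻ u in Metric.closedBall z r, f u ∂μ}
          ≤ (N : ℝ≥0∞) ^ p * ∫⁻ z, f z ^ p ∂μ)
    (r : ℝ) (hr : 0 < r) (s : Set X) (y : X)
    (hy : ∀ x ∈ s, y ∈ Metric.closedBall x r)
    (hpair : s.Pairwise fun a b => r < dist a b)
    (t : Finset X) (hts : ↑t ⊆ s) (hyt : y ∉ t) :
    (t.card : ℝ) ≤ p ^ p * (p - 1) ^ (1 - p) * (N : ℝ) ^ p := by
  classical
  have hp0 : (0:ℝ) < p := by linarith
  have hp1 : (0:ℝ) < p - 1 := by linarith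
  set c : ℝ≥0∞ := ENNReal.ofReal (p - 1) with hc_def
  have hc0 : 0 < c := ENNReal.ofReal_pos.mpr hp1
  have hc_top : c ≠ ∞ := ENNReal.ofReal_ne_top
  set w : X → ℝ≥0∞ := fun z => if z = y then c else 1 with hw_def
  set μ : Measure X := ∑ z ∈ insert y t, w z • Measure.dirac z with hμ_def
  have hμform : ∃ (t' : Finset X) (w' : X → ℝ≥0∞),
      μ = ∑ z ∈ t', w' z • Measure.dirac z := ⟨insert y t, w, rfl⟩
  set f : X → ℝ≥0∞ := fun u => if u = y then 1 else 0 with hf_def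
  set α : ℝ≥0∞ := c / (c + 1) with hα_def
  have hc1_top : c + 1 ≠ ∞ := by finiteness
  have hα0 : 0 < α := ENNReal.div_pos hc0.ne' hc1_top
  have hα_top : α ≠ ∞ := by
    simp only [hα_def]
    exact (ENNReal.div_lt_top hc_top (by simp)).ne
  -- measure of an arbitrary set
  have hμ_apply : ∀ A : Set X, μ A = ∑ z ∈ insert y t, w z * A.indicator 1 z := by
    intro A
    simp [hμ_def, Measure.finset_sum_apply, Measure.smul_apply, Measure.dirac_apply,
      smul_eq_mul]
  -- lintegral against μ
  have hμ_int : ∀ g : X → ℝ≥0∞, ∫⁻ u, g u ∂μ = ∑ z ∈ insert y t, w z * g z := by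
    intro g
    simp [hμ_def, lintegral_finset_sum_measure, lintegral_smul_measure, lintegral_dirac]
  -- key computation at each center x ∈ t
  have hball : ∀ x ∈ t, μ (Metric.closedBall x r) = c + 1 := by
    intro x hx
    rw [hμ_apply, Finset.sum_insert hyt]
    have hyB : (Metric.closedBall x r).indicator (1 : X → ℝ≥0∞) y = 1 := by
      rw [Set.indicator_of_mem (hy x (hts hx))]; rfl
    have hsum : ∑ z ∈ t, w z * (Metric.closedBall x r).indicator 1 z
        = ∑ z ∈ t, if z = x then 1 else 0 := by
      apply Finset.sum_congr rfl
      intro z hz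
      have hzy : z ≠ y := fun h => hyt (h ▸ hz)
      have hwz : w z = 1 := if_neg hzy
      by_cases hzx : z = x
      · subst hzx
        rw [if_pos rfl, hwz, Set.indicator_of_mem (Metric.mem_closedBall_self hr.le)]
        simp
      · rw [if_neg hzx, hwz, Set.indicator_of_notMem]
        · ring
        · intro hmem
          have := hpair (hts hz) (hts hx) hzx
          rw [Metric.mem_closedBall] at hmem
          exact absurd hmem (not_le.mpr this)
    rw [hsum, Finset.sum_ite_eq' t x (fun _ => 1), if_pos hx]
    simp [hw_def, hyB]
  have hint_ball : ∀ x ∈ t, (∫⁻ u in Metric.closedBall x r, f u ∂μ) = c := by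
    intro x hx
    rw [← lintegral_indicator measurableSet_closedBall, hμ_int,
      Finset.sum_insert hyt]
    have h1 : (Metric.closedBall x r).indicator f y = 1 := by
      rw [Set.indicator_of_mem (hy x (hts hx))]; simp [hf_def]
    have h2 : ∑ z ∈ t, w z * (Metric.closedBall x r).indicator f z = 0 := by
      apply Finset.sum_eq_zero
      intro z hz
      have hzy : z ≠ y := fun h => hyt (h ▸ hz)
      have : (Metric.closedBall x r).indicator f z = 0 := by
        by_cases hmem : z ∈ Metric.closedBall x r
        · rw [Set.indicator_of_mem hmem]; simp [hf_def, hzy]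
        · exact Set.indicator_of_notMem hmem _
      rw [this, mul_zero]
    rw [h1, h2, add_zero, mul_one]
    simp [hw_def, if_pos rfl]
  -- all centers lie in the superlevel set
  set S : Set X := {z | α ≤ (μ (Metric.closedBall z r))⁻¹ *
      ∫⁻ u in Metric.closedBall z r, f u ∂μ} with hS_def
  have hmemS : ∀ x ∈ t, x ∈ S := by
    intro x hx
    show α ≤ _
    rw [hball x hx, hint_ball x hx, hα_def, div_eq_mul_inv, mul_comm]
  have hμS : (t.card : ℝ≥0∞) ≤ μ S := by
    rw [hμ_apply, Finset.sum_insert hyt]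
    calc (t.card : ℝ≥0∞) = ∑ z ∈ t, 1 := by simp
    _ = ∑ z ∈ t, w z * S.indicator 1 z := by
        apply Finset.sum_congr rfl
        intro z hz
        have hzy : z ≠ y := fun h => hyt (h ▸ hz)
        rw [hw_def]
        simp only [if_neg hzy, one_mul]
        rw [Set.indicator_of_mem (hmemS z hz)]
        rfl
    _ ≤ _ := le_add_self
  -- the integral on the right-hand side
  have hrhs : (∫⁻ z, f z ^ p ∂μ) = c := by
    rw [hμ_int, Finset.sum_insert hyt]
    have h1 : f y ^ p = 1 := by simp [hf_def]
    have h2 : ∑ z ∈ t, w z * f z ^ p = 0 := by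
      apply Finset.sum_eq_zero
      intro z hz
      have hzy : z ≠ y := fun h => hyt (h ▸ hz)
      simp [hf_def, if_neg hzy, ENNReal.zero_rpow_of_pos hp0]
    rw [h1, h2, add_zero, mul_one]
    simp [hw_def, if_pos rfl]
  have hkey := hweak μ hμform r hr f α hα0
  rw [hrhs] at hkey
  have hαp0 : α ^ p ≠ 0 := (ENNReal.rpow_pos hα0 hα_top).ne'
  have hαp_top : α ^ p ≠ ∞ := ENNReal.rpow_ne_top_of_nonneg hp0.le hα_top
  have hmain : (t.card : ℝ≥0∞) ≤ ((N : ℝ≥0∞) ^ p * c) / α ^ p := by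
    rw [ENNReal.le_div_iff_mul_le (Or.inl hαp0) (Or.inl hαp_top)]
    calc (t.card : ℝ≥0∞) * α ^ p ≤ μ S * α ^ p :=
          mul_le_mul_left hμS _
    _ = α ^ p * μ S := mul_comm _ _
    _ ≤ (N : ℝ≥0∞) ^ p * c := hkey
  -- convert to real numbers
  have hc1 : c + 1 = ENNReal.ofReal p := by
    rw [hc_def, ← ENNReal.ofReal_one, ← ENNReal.ofReal_add (by linarith) zero_le_one]
    norm_num
  have hα_real : α = ENNReal.ofReal ((p - 1) / p) := by
    rw [hα_def, hc1, hc_def, ← ENNReal.ofReal_div_of_pos hp0]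
  have hbase_pos : (0:ℝ) < (p - 1) / p := div_pos hp1 hp0
  have hN_real : ((N : ℝ≥0∞)) = ENNReal.ofReal (N : ℝ) := by
    simp [ENNReal.ofReal_natCast]
  have hrhs_real : ((N : ℝ≥0∞) ^ p * c) / α ^ p
      = ENNReal.ofReal ((N:ℝ) ^ p * (p - 1) / ((p - 1) / p) ^ p) := by
    rw [hα_real, ENNReal.ofReal_rpow_of_pos hbase_pos, hN_real,
      ENNReal.ofReal_rpow_of_pos (by positivity), hc_def,
      ← ENNReal.ofReal_mul (by positivity),
      ← ENNReal.ofReal_div_of_pos (Real.rpow_pos_of_pos hbase_pos p)]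
  rw [hrhs_real] at hmain
  have hreal_eq : (N:ℝ) ^ p * (p - 1) / ((p - 1) / p) ^ p
      = p ^ p * (p - 1) ^ (1 - p) * (N : ℝ) ^ p := by
    rw [Real.div_rpow hp1.le hp0.le]
    have h1p : (p - 1 : ℝ) ^ (1 - p) = (p - 1) / (p - 1) ^ p := by
      rw [Real.rpow_sub hp1, Real.rpow_one]
    rw [h1p]
    have hpp : (0:ℝ) < p ^ p := Real.rpow_pos_of_pos hp0 p
    have hp1p : (0:ℝ) < (p - 1) ^ p := Real.rpow_pos_of_pos hp1 p
    field_simp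
  rw [hreal_eq] at hmain
  have hK_nonneg : (0:ℝ) ≤ p ^ p * (p - 1) ^ (1 - p) * (N : ℝ) ^ p := by
    linarith [besicovitch_K_ge_one hp hN]
  have : (t.card : ℝ≥0∞) = ENNReal.ofReal (t.card : ℝ) := by
    simp [ENNReal.ofReal_natCast]
  rw [this] at hmain
  exact (ENNReal.ofReal_le_ofReal_iff hK_nonneg).mp hmain

/-- If the averaging operators satisfy a uniform weak type `(p,p)` bound with
constant `N` over all finitely supported discrete Borel measures and all radii, then
the space has the equal-radius Besicovitch intersection property with constant at
most `⌊p^p (p−1)^{1−p} N^p⌋`. -/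
theorem equal_radius_besicovitch_of_uniform_weak_type {X : Type*} [MetricSpace X]
    [MeasurableSpace X] [BorelSpace X]
    (p : ℝ) (hp : 1 < p) (N : ℕ) (hN : 1 ≤ N)
    (hweak : ∀ μ : Measure X,
      (∃ (t : Finset X) (w : X → ℝ≥0∞), μ = ∑ z ∈ t, w z • Measure.dirac z) →
      ∀ (r : ℝ), 0 < r → ∀ (f : X → ℝ≥0∞) (α : ℝ≥0∞), 0 < α →
        α ^ p * μ {z | α ≤ (μ (Metric.closedBall z r))⁻¹ *
            ∫⁻ u in Metric.closedBall z r, f u ∂μ}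
          ≤ (N : ℝ≥0∞) ^ p * ∫⁻ z, f z ^ p ∂μ) :
    ∀ (r : ℝ), 0 < r → ∀ (s : Set X) (y : X),
      (∀ x ∈ s, y ∈ Metric.closedBall x r) →
      (s.Pairwise fun a b => r < dist a b) →
      s.Finite ∧ s.ncard ≤ ⌊p ^ p * (p - 1) ^ (1 - p) * (N : ℝ) ^ p⌋₊ := by
  intro r hr s y hy hpair
  by_cases hys : y ∈ s
  · -- degenerate case : then s ⊆ {y}
    have hsub : s ⊆ {y} := by
      intro x hx
      by_contra hxy
      simp only [Set.mem_singleton_iff] at hxy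
      have h1 := hpair hx hys hxy
      have h2 := hy x hx
      rw [Metric.mem_closedBall, dist_comm] at h2
      exact absurd h2 (not_le.mpr h1)
    have hfin : s.Finite := (Set.finite_singleton y).subset hsub
    refine ⟨hfin, ?_⟩
    have h1 : s.ncard ≤ 1 := by
      simpa using Set.ncard_le_ncard hsub (Set.finite_singleton y)
    have h2 : 1 ≤ ⌊p ^ p * (p - 1) ^ (1 - p) * (N : ℝ) ^ p⌋₊ :=
      Nat.le_floor (by exact_mod_cast besicovitch_K_ge_one hp hN)
    omega
  · -- main case : y ∉ s
    have hbound : ∀ t : Finset X, ↑t ⊆ s →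
        t.card ≤ ⌊p ^ p * (p - 1) ^ (1 - p) * (N : ℝ) ^ p⌋₊ := by
      intro t hts
      have hyt : y ∉ t := fun h => hys (hts h)
      have := besicovitch_card_bound p hp N hN hweak r hr s y hy hpair t hts hyt
      exact Nat.le_floor this
    have hfin : s.Finite := by
      by_contra hinf
      have hinf' : s.Infinite := hinf
      obtain ⟨t, hts, hcard⟩ := hinf'.exists_subset_card_eq
        (⌊p ^ p * (p - 1) ^ (1 - p) * (N : ℝ) ^ p⌋₊ + 1)
      have := hbound t hts
      omega
    refine ⟨hfin, ?_⟩
    have := hbound hfin.toFinset (by simp)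
    rwa [← Set.ncard_coe_finset, Set.Finite.coe_toFinset] at this
end

section
/- Let (X, d) be a metric space, y ∈ X, r > 0, N ≥ 1, and let c > 0. Define μ_c = c δ_y + Σ_{i=1}^{N+1} δ_{x_i}, where x_1, ..., x_{N+1} are centers of an intersecting Besicovitch family of closed balls of common radius r all containing y. Set f_c = c^{-1} 1_{{y}}. Then ‖f_c‖_{L¹(μ_c)} = 1 and A_{r,μ_c} f_c(x_i) = 1/(1+c) for each i, so ‖A_{r,μ_c} f_c‖_{L¹(μ_c)} > (N+1)/(1+c). -/
open MeasureTheory Metric Set ENNReal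

/-- For the measure `μ_c = c δ_y + Σ_i δ_{x_i}` built from an intersecting
Besicovitch family of closed balls of common radius `r` all containing `y`, and
`f_c = c⁻¹ 1_{{y}}`, one has `‖f_c‖_{L¹} = 1`, `A_{r,μ_c} f_c(x_i) = 1/(1+c)` for
every `i`, and `‖A_{r,μ_c} f_c‖_{L¹} > (N+1)/(1+c)`. -/
theorem averaging_dirac_measure_computation {X : Type*} [MetricSpace X]
    [MeasurableSpace X] [BorelSpace X]
    (r : ℝ) (hr : 0 < r) (N : ℕ) (hN : 1 ≤ N) (y : X)
    (x : Fin (N + 1) → X)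
    (hy : ∀ i, y ∈ Metric.closedBall (x i) r)
    (hsep : ∀ i j, i ≠ j → r < dist (x i) (x j))
    (c : ℝ≥0∞) (hc : 0 < c) (hc' : c ≠ ⊤) :
    let μ : Measure X := c • Measure.dirac y + ∑ i, Measure.dirac (x i)
    let f : X → ℝ≥0∞ := Set.indicator {y} fun _ => c⁻¹
    (∫⁻ z, f z ∂μ) = 1 ∧
    (∀ i, (μ (Metric.closedBall (x i) r))⁻¹ *
        ∫⁻ w in Metric.closedBall (x i) r, f w ∂μ = (1 + c)⁻¹) ∧
    ((N : ℝ≥0∞) + 1) / (1 + c) <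
      ∫⁻ z, (μ (Metric.closedBall z r))⁻¹ *
        ∫⁻ w in Metric.closedBall z r, f w ∂μ ∂μ := by
  intro μ f
  -- basic facts
  have hxy : ∀ i, x i ≠ y := by
    intro i hi
    have : Nontrivial (Fin (N+1)) := Fin.nontrivial_iff_two_le.mpr (by omega)
    obtain ⟨j, hj⟩ := exists_ne i
    have h1 := hsep i j (Ne.symm hj)
    have h2 := hy j
    rw [hi] at h1
    rw [mem_closedBall] at h2
    exact absurd h2 (not_le.mpr h1)
  -- generic integral formula
  have key : ∀ g : X → ℝ≥0∞, ∫⁻ z, g z ∂μ = c * g y + ∑ i, g (x i) := by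
    intro g
    simp only [μ, lintegral_add_measure, lintegral_smul_measure,
      lintegral_finset_sum_measure, lintegral_dirac, smul_eq_mul]
  have hcc : c * c⁻¹ = 1 := ENNReal.mul_inv_cancel hc.ne' hc'
  have hfy : f y = c⁻¹ := by simp [f]
  have hfx : ∀ i, f (x i) = 0 := fun i => indicator_of_notMem (by simp [hxy i]) _
  -- set integral over any measurable set containing y equals 1
  have hset : ∀ s : Set X, MeasurableSet s → y ∈ s →
      ∫⁻ w in s, f w ∂μ = 1 := by
    intro s hs hys
    rw [← lintegral_indicator hs, key]
    have h1 : s.indicator f y = c⁻¹ := by rw [indicator_of_mem hys, hfy]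
    have h2 : ∀ i, s.indicator f (x i) = 0 := by
      intro i
      by_cases h : x i ∈ s
      · rw [indicator_of_mem h, hfx]
      · rw [indicator_of_notMem h]
    simp [h1, h2, hcc]
  -- measure of the balls around x i
  have hμball : ∀ i, μ (Metric.closedBall (x i) r) = 1 + c := by
    intro i
    have : ∀ j, Measure.dirac (x j) (Metric.closedBall (x i) r)
        = if j = i then 1 else 0 := by
      intro j
      by_cases h : j = i
      · subst h; simp [Measure.dirac_apply, indicator_of_mem,
          mem_closedBall, dist_self, hr.le]
      · have hnot : x j ∉ Metric.closedBall (x i) r := by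
          simp only [mem_closedBall, not_le]
          have := hsep i j (fun hh => h hh.symm)
          rwa [dist_comm] at this
        rw [if_neg h, Measure.dirac_apply, indicator_of_notMem hnot]
    simp only [μ, Measure.add_apply, Measure.smul_apply, smul_eq_mul,
      Measure.finset_sum_apply, this]
    rw [Measure.dirac_apply, indicator_of_mem (hy i)]
    simp [add_comm]
  have hball_meas : ∀ z : X, MeasurableSet (Metric.closedBall z r) :=
    fun z => measurableSet_closedBall
  -- part 1
  have part1 : (∫⁻ z, f z ∂μ) = 1 := by
    rw [key]; simp [hfy, hfx, hcc]
  -- part 2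
  have part2 : ∀ i, (μ (Metric.closedBall (x i) r))⁻¹ *
      ∫⁻ w in Metric.closedBall (x i) r, f w ∂μ = (1 + c)⁻¹ := by
    intro i
    rw [hμball i, hset _ (hball_meas _) (hy i), mul_one]
  refine ⟨part1, part2, ?_⟩
  -- part 3
  set g : X → ℝ≥0∞ := fun z => (μ (Metric.closedBall z r))⁻¹ *
      ∫⁻ w in Metric.closedBall z r, f w ∂μ with hg
  have hsum : ∑ i, g (x i) = ((N : ℝ≥0∞) + 1) / (1 + c) := by
    have : ∀ i, g (x i) = (1 + c)⁻¹ := part2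
    rw [Finset.sum_congr rfl (fun i _ => this i)]
    rw [Finset.sum_const, Finset.card_univ, Fintype.card_fin, nsmul_eq_mul,
      div_eq_mul_inv]
    push_cast
    ring
  have hgy : 0 < g y := by
    have hy' : y ∈ Metric.closedBall y r := by simp [hr.le]
    have h1 : ∫⁻ w in Metric.closedBall y r, f w ∂μ = 1 :=
      hset _ (hball_meas _) hy'
    have h2 : μ (Metric.closedBall y r) ≠ ⊤ := by
      have : μ (Metric.closedBall y r) ≤ μ univ := measure_mono (subset_univ _)
      have huniv : μ univ = c + (N + 1) := by
        simp [μ, Measure.add_apply, Measure.smul_apply, Measure.finset_sum_apply]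
      refine ne_top_of_le_ne_top ?_ this
      rw [huniv]
      exact ENNReal.add_ne_top.mpr ⟨hc', by simp⟩
    rw [hg]
    simp only [h1, mul_one]
    exact ENNReal.inv_pos.mpr h2
  have hfin : ((N : ℝ≥0∞) + 1) / (1 + c) ≠ ⊤ := by
    rw [div_eq_mul_inv]
    exact ENNReal.mul_ne_top (by simp) (ENNReal.inv_ne_top.mpr (by simp))
  calc ((N : ℝ≥0∞) + 1) / (1 + c)
      < ((N : ℝ≥0∞) + 1) / (1 + c) + c * g y := by
        exact ENNReal.lt_add_right hfin (by
          simp [mul_eq_zero, hc.ne', hgy.ne'])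
    _ = c * g y + ∑ i, g (x i) := by rw [hsum, add_comm]
    _ = ∫⁻ z, g z ∂μ := (key g).symm
end

section
/- In (ℝ^d, ‖·‖_∞), the equal-radius Besicovitch constant equals 2^d: any family of closed ℓ^∞-balls of common radius r with a common point, whose centers are pairwise at ℓ^∞-distance greater than r, has at most 2^d members, and this bound is attained. -/
open Metric Set

/-- The equal-radius Besicovitch constant of `ℝ^d` with the `ℓ^∞` norm is `2^d`:
every intersecting equal-radius Besicovitch family of closed balls (cubes) has at
most `2^d` members, and `2^d` is attained. -/
theorem equal_radius_besicovitch_linf_eq_pow (d : ℕ) :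
    (∀ (r : ℝ), 0 < r → ∀ (s : Set (Fin d → ℝ)) (y : Fin d → ℝ),
      (∀ x ∈ s, y ∈ Metric.closedBall x r) →
      (s.Pairwise fun a b => r < dist a b) → s.Finite ∧ s.ncard ≤ 2 ^ d) ∧
    (∃ (r : ℝ), 0 < r ∧ ∃ (s : Set (Fin d → ℝ)) (y : Fin d → ℝ),
      (∀ x ∈ s, y ∈ Metric.closedBall x r) ∧
      (s.Pairwise fun a b => r < dist a b) ∧ s.ncard = 2 ^ d) := by
  constructor
  · intro r hr s y hy hpw
    set f : (Fin d → ℝ) → (Fin d → Bool) := fun x i => decide (y i < x i) with hf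
    have hinj : Set.InjOn f s := by
      intro a ha b hb hab
      by_contra hne
      have hd := hpw ha hb hne
      have hle : dist a b ≤ r := by
        rw [dist_pi_le_iff hr.le]
        intro i
        have ha' : dist (a i) (y i) ≤ r :=
          le_trans (dist_le_pi_dist a y i) (by simpa [dist_comm] using hy a ha)
        have hb' : dist (b i) (y i) ≤ r :=
          le_trans (dist_le_pi_dist b y i) (by simpa [dist_comm] using hy b hb)
        have hfi : (y i < a i) ↔ (y i < b i) := by
          have := congrFun hab i
          simpa [hf, decide_eq_decide] using this
        rw [Real.dist_eq, abs_le] at ha' hb' ⊢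
        rcases lt_or_ge (y i) (a i) with h1 | h1
        · have h2 : y i < b i := hfi.mp h1
          constructor <;> linarith [ha'.1, ha'.2, hb'.1, hb'.2]
        · have h2 : b i ≤ y i := le_of_not_gt (fun h => absurd (hfi.mpr h) (not_lt.mpr h1))
          constructor <;> linarith [ha'.1, ha'.2, hb'.1, hb'.2]
      exact absurd hle (not_le.mpr hd)
    have hfin : s.Finite := Set.Finite.of_finite_image (Set.toFinite _) hinj
    refine ⟨hfin, ?_⟩
    calc s.ncard = (f '' s).ncard := (Set.ncard_image_of_injOn hinj).symm
      _ ≤ (Set.univ : Set (Fin d → Bool)).ncard :=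
          Set.ncard_le_ncard (Set.subset_univ _) Set.finite_univ
      _ = 2 ^ d := by simp [Set.ncard_univ, Nat.card_eq_fintype_card]
  · refine ⟨2, by norm_num,
      (fun v : Fin d → Bool => fun i => if v i then (2 : ℝ) else -1) '' Set.univ, 0,
      ?_, ?_, ?_⟩
    · rintro x ⟨v, -, rfl⟩
      rw [mem_closedBall, dist_comm, dist_pi_le_iff (by norm_num : (0:ℝ) ≤ 2)]
      intro i
      rw [Real.dist_eq]
      by_cases h : v i <;> simp [h] <;> norm_num
    · rintro _ ⟨v, -, rfl⟩ _ ⟨w, -, rfl⟩ hne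
      have hvw : v ≠ w := by rintro rfl; exact hne rfl
      obtain ⟨i, hi⟩ := Function.ne_iff.mp hvw
      have h3 : dist ((if v i then (2:ℝ) else -1)) ((if w i then (2:ℝ) else -1)) = 3 := by
        rcases Bool.eq_false_or_eq_true (v i) with h | h <;>
          rcases Bool.eq_false_or_eq_true (w i) with h' | h' <;>
          simp_all [Real.dist_eq] <;> norm_num
      calc (2:ℝ) < 3 := by norm_num
        _ = dist ((if v i then (2:ℝ) else -1)) ((if w i then (2:ℝ) else -1)) := h3.symm
        _ ≤ _ := dist_le_pi_dist (fun j => if v j then (2:ℝ) else -1) (fun j => if w j then (2:ℝ) else -1) i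
    · rw [Set.ncard_image_of_injective _ ?_, Set.ncard_univ]
      · simp [Nat.card_eq_fintype_card]
      · intro v w h
        funext i
        have := congrFun h i
        rcases Bool.eq_false_or_eq_true (v i) with h1 | h1 <;>
          rcases Bool.eq_false_or_eq_true (w i) with h2 | h2 <;>
          simp_all <;> norm_num at this
end
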